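/- arXiv:2308.03190 — 11 statements merged into one kernel-verified Lean document; each statement's English description precedes it below -/
import Mathlib

section
/- Let X be a Hausdorff locally compact non-compact space and C ⊆ X compact and not open. Then Y = X \ C is not connected near infinity. -/
open Set

/-- A space is connected near infinity if every relatively compact subset is
contained in a relatively compact subset with connected complement. -/
def ConnectedNearInfinity (Y : Type*) [TopologicalSpace Y] : Prop :=
  ∀ A : Set Y, IsCompact (closure A) →
    ∃ B : Set Y, A ⊆ B ∧ IsCompact (closure B) ∧ IsPreconnected Bᶜ

/-!
Take a compact neighbourhood `K` of `C` and let `V` be the trace of `interior K` on `Y = X \ C`.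
The frontier of `V` lies in the compact set `frontier (interior K) ⊆ Y`. The connected complement
of a relatively compact set containing `frontier V` cannot meet both `V` and `Vᶜ`, so one
of them is relatively compact in `Y`. But `V` accumulates at a boundary point of `C`, outside
`Y`, and `Vᶜ` together with `K` covers the non-compact space `X`.
-/

theorem ConnectedNearInfinity.isCompact_closure_or_isCompact_closure_compl
    {Y : Type*} [TopologicalSpace Y] (h : ConnectedNearInfinity Y) {V : Set Y}
    (hV : IsCompact (closure (frontier V))) :
    IsCompact (closure V) ∨ IsCompact (closure Vᶜ) := by
  obtain ⟨B, hVB, hB, hBc⟩ := h _ hV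
  have hcover : Bᶜ ⊆ interior V ∪ interior Vᶜ := by
    rw [← compl_frontier_eq_union_interior]
    exact compl_subset_compl.2 hVB
  have hdisj : Disjoint (interior V) (interior Vᶜ) :=
    disjoint_compl_right.mono interior_subset interior_subset
  have hcompact {W : Set Y} (hW : Bᶜ ⊆ interior Wᶜ) : IsCompact (closure W) := by
    refine hB.of_isClosed_subset isClosed_closure (closure_mono fun y hy => ?_)
    by_contra hyB
    exact interior_subset (hW hyB) hy
  rcases hBc.subset_or_subset isOpen_interior isOpen_interior hdisj hcover with hBV | hBV
  · exact Or.inr (hcompact (by rwa [compl_compl]))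
  · exact Or.inl (hcompact hBV)

theorem closure_image_val_subset_image_closure {X : Type*} [TopologicalSpace X] [T2Space X]
    {s : Set X} {t : Set s} (ht : IsCompact (closure t)) :
    closure (Subtype.val '' t) ⊆ Subtype.val '' closure t :=
  (ht.image continuous_subtype_val).isClosed.closure_subset_iff.2 (image_mono subset_closure)

/-- If X is locally compact Hausdorff non-compact and C is compact not open,
then X \ C is not connected near infinity. -/
theorem stmt_4 {X : Type*} [TopologicalSpace X] [T2Space X] [LocallyCompactSpace X]
    (hnc : ¬ CompactSpace X) (C : Set X) (hC : IsCompact C) (hCo : ¬ IsOpen C) :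
    ¬ ConnectedNearInfinity (Cᶜ : Set X) := by
  intro h
  obtain ⟨x, hxC, hx_int⟩ := not_subset.1 (mt subset_interior_iff_isOpen.1 hCo)
  obtain ⟨K, hK, hCK⟩ := exists_compact_superset hC
  set U := interior K
  let V : Set (Cᶜ : Set X) := Subtype.val ⁻¹' U
  have hfrontier : IsCompact (closure (frontier V)) := by
    have hUfr : frontier U ⊆ Cᶜ := fun y hy hyC =>
      ((isOpen_interior (s := K)).frontier_eq ▸ hy).2 (hCK hyC)
    rw [isClosed_frontier.closure_eq, ← hC.isClosed.isOpen_compl.isOpenMap_subtype_val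
      |>.preimage_frontier_eq_frontier_preimage continuous_subtype_val, Subtype.isCompact_iff,
      Subtype.image_preimage_coe, inter_eq_right.2 hUfr]
    exact hK.of_isClosed_subset isClosed_frontier
      (frontier_interior_subset.trans hK.isClosed.frontier_subset)
  have hV : ¬ IsCompact (closure V) := by
    intro hcl
    have hx : x ∈ closure (Subtype.val '' V) := by
      rw [Subtype.image_preimage_coe, inter_comm]
      exact isOpen_interior.inter_closure ⟨hCK hxC, closure_compl (s := C) ▸ hx_int⟩
    obtain ⟨y, -, rfl⟩ := closure_image_val_subset_image_closure hcl hx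
    exact y.2 hxC
  have hVc : ¬ IsCompact (closure Vᶜ) := by
    intro hcl
    refine hnc (isCompact_univ_iff.1 <| (hK.union (hcl.image continuous_subtype_val))
      |>.of_isClosed_subset isClosed_univ fun y _ => ?_)
    by_cases hy : y ∈ U
    · exact Or.inl (interior_subset hy)
    · exact Or.inr ⟨⟨y, fun hyC => hy (hCK hyC)⟩, subset_closure hy, rfl⟩
  exact (h.isCompact_closure_or_isCompact_closure_compl hfrontier).elim hV hVc
end

section
/- Let X be a Hausdorff locally compact space that is connected near infinity, and let C ⊆ X be compact and not open. Then X \ C is not homeomorphic to X. -/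
theorem connectedNearInfinity_of_homeomorph {Y Z : Type*} [TopologicalSpace Y]
    [TopologicalSpace Z] (e : Y ≃ₜ Z) (hZ : ConnectedNearInfinity Z) :
    ConnectedNearInfinity Y := by
  intro A hA
  obtain ⟨B, hAB, hBc, hBpc⟩ := hZ (e '' A) (by
    rw [← e.image_closure]
    exact hA.image e.continuous)
  · refine ⟨e ⁻¹' B, fun a ha => hAB (Set.mem_image_of_mem e ha), ?_, ?_⟩
    · have h1 : e ⁻¹' B = e.symm '' B := congrFun e.image_symm B |>.symm
      rw [h1, ← e.symm.image_closure]
      exact hBc.image e.symm.continuous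
    · have h2 : (e ⁻¹' B)ᶜ = e.symm '' Bᶜ := by
        rw [← Set.preimage_compl]; exact (congrFun e.image_symm Bᶜ).symm
      rw [h2]
      exact hBpc.image e.symm e.symm.continuous.continuousOn

/-- If X is locally compact Hausdorff connected near infinity and C is compact
not open, then X \ C is not homeomorphic to X. -/
theorem stmt_5 {X : Type*} [TopologicalSpace X] [T2Space X] [LocallyCompactSpace X]
    (hX : ConnectedNearInfinity X) (C : Set X) (hC : IsCompact C) (hCo : ¬ IsOpen C) :
    IsEmpty ((Cᶜ : Set X) ≃ₜ X) := by
  rw [isEmpty_iff]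
  intro e
  -- transported connectedness near infinity
  have hCNI : ConnectedNearInfinity (Cᶜ : Set X) := connectedNearInfinity_of_homeomorph e hX
  -- a boundary point of C witnessing non-openness
  obtain ⟨x, hxC, hxint⟩ : ∃ x ∈ C, x ∉ interior C := by
    by_contra h
    push_neg at h
    have : C = interior C := Set.Subset.antisymm h interior_subset
    exact hCo (this ▸ isOpen_interior)
  have hxcl : x ∈ closure (Cᶜ : Set X) := by
    rw [closure_compl]; exact hxint
  -- a relatively compact open set V containing C
  obtain ⟨K, hK, hCK⟩ := exists_compact_superset hC
  set V : Set X := interior K with hV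
  have hVo : IsOpen V := isOpen_interior
  have hclVK : closure V ⊆ K := closure_minimal interior_subset hK.isClosed
  have hclV : IsCompact (closure V) := hK.of_isClosed_subset isClosed_closure hclVK
  have hfr : frontier V ⊆ Cᶜ := by
    intro y hy
    rw [hVo.frontier_eq] at hy
    exact fun hyC => hy.2 (hCK hyC)
  have hfrc : IsCompact (frontier V) :=
    hclV.of_isClosed_subset isClosed_frontier (frontier_subset_closure)
  -- the separator inside Cᶜ
  set A : Set (Cᶜ : Set X) := Subtype.val ⁻¹' frontier V with hA
  have hAimg : Subtype.val '' A = frontier V := by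
    rw [hA, Subtype.image_preimage_coe]
    exact Set.inter_eq_self_of_subset_right hfr
  have hAc : IsCompact A := Subtype.isCompact_iff.mpr (hAimg ▸ hfrc)
  have hAcl : IsCompact (closure A) := by
    rwa [hAc.isClosed.closure_eq]
  obtain ⟨B, hAB, hBcl, hBpc⟩ := hCNI A hAcl
  -- push everything to X
  set D : Set X := Subtype.val '' closure B with hD
  have hDc : IsCompact D := hBcl.image continuous_subtype_val
  have hDCc : D ⊆ Cᶜ := by
    rintro _ ⟨b, _, rfl⟩; exact b.2
  have hxD : x ∉ D := fun h => hDCc h hxC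
  set S : Set X := Subtype.val '' Bᶜ with hS
  have hSpc : IsPreconnected S := hBpc.image _ continuous_subtype_val.continuousOn
  -- S avoids the frontier of V
  have hSfr : ∀ z ∈ S, z ∉ frontier V := by
    rintro _ ⟨b, hb, rfl⟩ hfrz
    exact hb (hAB hfrz)
  have hScover : S ⊆ V ∪ (closure V)ᶜ := by
    intro z hz
    by_cases hzV : z ∈ V
    · exact Or.inl hzV
    · refine Or.inr fun hzcl => hSfr z hz ?_
      rw [hVo.frontier_eq]; exact ⟨hzcl, hzV⟩
  -- a point of S inside V, near x
  have hxV : x ∈ V := hCK hxC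
  obtain ⟨z, ⟨hzV, hzD⟩, hzCc⟩ : ((V ∩ Dᶜ) ∩ Cᶜ).Nonempty := by
    have : x ∈ V ∩ Dᶜ := ⟨hxV, hxD⟩
    exact mem_closure_iff.mp hxcl _ (hVo.inter hDc.isClosed.isOpen_compl) this
  have hzS : z ∈ S := by
    refine ⟨⟨z, hzCc⟩, fun hb => hzD ?_, rfl⟩
    exact ⟨⟨z, hzCc⟩, subset_closure hb, rfl⟩
  -- a point of S outside closure V
  by_cases hcov : (Cᶜ : Set X) ⊆ closure V ∪ D
  · -- then X is compact, so Cᶜ is compact, so C is open: contradiction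
    have hXc : IsCompact (Set.univ : Set X) := by
      refine ((hclV.union hDc).union hC).of_isClosed_subset isClosed_univ ?_
      intro y _
      by_cases hyC : y ∈ C
      · exact Or.inr hyC
      · rcases hcov hyC with h | h
        · exact Or.inl (Or.inl h)
        · exact Or.inl (Or.inr h)
    have : CompactSpace X := isCompact_univ_iff.mp hXc
    have : CompactSpace (Cᶜ : Set X) := e.symm.compactSpace
    have hCcc : IsCompact (Cᶜ : Set X) := isCompact_iff_compactSpace.mpr this
    have : IsOpen C := by
      rw [← compl_compl C]
      exact hCcc.isClosed.isOpen_compl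
    exact hCo this
  · rw [Set.not_subset] at hcov
    obtain ⟨z', hz'Cc, hz'⟩ := hcov
    have hz'cl : z' ∉ closure V := fun h => hz' (Or.inl h)
    have hz'D : z' ∉ D := fun h => hz' (Or.inr h)
    have hz'S : z' ∈ S := by
      refine ⟨⟨z', hz'Cc⟩, fun hb => hz'D ?_, rfl⟩
      exact ⟨⟨z', hz'Cc⟩, subset_closure hb, rfl⟩
    -- contradiction with preconnectedness of S
    obtain ⟨w, _, hwV, hwcl⟩ := hSpc V (closure V)ᶜ hVo isClosed_closure.isOpen_compl
      hScover ⟨z, hzS, hzV⟩ ⟨z', hz'S, hz'cl⟩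
    exact hwcl (subset_closure hwV)
end

section
/- Let X be a Hausdorff locally compact space connected near infinity, and let p ∈ X be a non-isolated point. Then X \ {p} is not homeomorphic to X. -/
/-- If X is locally compact Hausdorff connected near infinity and p is a
non-isolated point, then X \ {p} is not homeomorphic to X. -/
theorem stmt_6 {X : Type*} [TopologicalSpace X] [T2Space X] [LocallyCompactSpace X]
    (hX : ConnectedNearInfinity X) (p : X) (hp : ¬ IsOpen ({p} : Set X)) :
    IsEmpty ((({p}ᶜ : Set X)) ≃ₜ X) := by
  constructor
  intro e
  -- transport connectedness near infinity to the punctured space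
  have hY : ConnectedNearInfinity ({p}ᶜ : Set X) := by
    intro A hA
    obtain ⟨B, hAB, hBc, hBp⟩ := hX (e '' A) (by
      rw [← e.image_closure]
      exact hA.image e.continuous)
    refine ⟨e ⁻¹' B, fun x hx => hAB ⟨x, hx, rfl⟩, ?_, ?_⟩
    · rw [← e.preimage_closure]
      exact e.isCompact_preimage.mpr hBc
    · have h1 := hBp.image e.symm e.symm.continuous.continuousOn
      have h2 : e.symm '' Bᶜ = (e ⁻¹' B)ᶜ := by
        rw [← Set.preimage_compl]
        ext x
        constructor
        · rintro ⟨z, hz, rfl⟩; simpa using hz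
        · intro hx; exact ⟨e x, hx, e.symm_apply_apply x⟩
      rwa [h2] at h1
  -- X is not compact
  have hnc : ¬ IsCompact (Set.univ : Set X) := by
    intro hc
    have hcX : CompactSpace X := isCompact_univ_iff.mp hc
    have hcY : CompactSpace ({p}ᶜ : Set X) := e.symm.compactSpace
    have hcomp : IsCompact ({p}ᶜ : Set X) := isCompact_iff_isCompact_univ.mpr isCompact_univ
    exact hp (isClosed_compl_iff.mp hcomp.isClosed)
  obtain ⟨K, hKc, hKn⟩ := exists_compact_mem_nhds p
  set A : Set X := K \ interior K with hA
  have hpK : p ∈ interior K := mem_interior_iff_mem_nhds.mpr hKn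
  have hAp : p ∉ A := fun h => h.2 hpK
  -- the preimage of A in the punctured space is compact
  have hA'c : IsCompact (Subtype.val ⁻¹' A : Set ({p}ᶜ : Set X)) := by
    rw [Subtype.isCompact_iff]
    have : Subtype.val '' (Subtype.val ⁻¹' A : Set ({p}ᶜ : Set X)) = A := by
      rw [Set.image_preimage_eq_inter_range, Subtype.range_coe]
      ext x
      simp only [Set.mem_inter_iff, Set.mem_compl_iff, Set.mem_singleton_iff, and_iff_left_iff_imp]
      rintro hx rfl
      exact hAp hx
    rw [this]
    exact hKc.diff isOpen_interior
  obtain ⟨B', hAB', hB'c, hB'p⟩ := hY _ (by rwa [hA'c.isClosed.closure_eq])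
  -- B : compact closed set in X avoiding p
  set B : Set X := Subtype.val '' closure B' with hBdef
  have hBc : IsCompact B := hB'c.image continuous_subtype_val
  have hpB : p ∉ B := by
    rintro ⟨y, _, hy⟩
    exact y.2 hy
  -- find a point q ≠ p near p avoiding B
  have hU : IsOpen (interior K ∩ Bᶜ) := isOpen_interior.inter hBc.isClosed.isOpen_compl
  have hpU : p ∈ interior K ∩ Bᶜ := ⟨hpK, hpB⟩
  have hq : ∃ q ∈ interior K ∩ Bᶜ, q ≠ p := by
    by_contra h
    push_neg at h
    apply hp
    have : interior K ∩ Bᶜ = {p} :=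
      Set.Subset.antisymm (fun x hx => h x hx) (Set.singleton_subset_iff.mpr hpU)
    rw [← this]; exact hU
  obtain ⟨q, ⟨hqK, hqB⟩, hqp⟩ := hq
  -- find a point r outside K ∪ B
  have hr : ∃ r, r ∉ K ∪ B := by
    by_contra h
    push_neg at h
    have huniv : K ∪ B = Set.univ := Set.eq_univ_of_forall h
    exact hnc (huniv ▸ hKc.union hBc)
  obtain ⟨r, hrKB⟩ := hr
  have hrK : r ∉ K := fun h => hrKB (Or.inl h)
  have hrB : r ∉ B := fun h => hrKB (Or.inr h)
  have hrp : r ≠ p := fun h => hrK (h ▸ interior_subset hpK)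
  -- S = image of the complement of B' is preconnected in X
  have hS : IsPreconnected (Subtype.val '' (B'ᶜ : Set ({p}ᶜ : Set X))) :=
    hB'p.image _ continuous_subtype_val.continuousOn
  set S : Set X := Subtype.val '' (B'ᶜ : Set ({p}ᶜ : Set X)) with hSdef
  have hmemS : ∀ (x : X) (hx : x ≠ p), x ∉ B → x ∈ S := by
    intro x hx hxB
    exact ⟨⟨x, hx⟩, fun hmem => hxB ⟨⟨x, hx⟩, subset_closure hmem, rfl⟩, rfl⟩
  have hSuv : S ⊆ interior K ∪ Kᶜ := by
    rintro x ⟨y, hy, rfl⟩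
    by_cases hK : (y : X) ∈ K
    · left
      by_contra hint
      exact hy (hAB' ⟨hK, hint⟩)
    · right; exact hK
  have := hS (interior K) Kᶜ isOpen_interior hKc.isClosed.isOpen_compl hSuv
    ⟨q, hmemS q hqp hqB, hqK⟩ ⟨r, hmemS r hrp hrB, hrK⟩
  obtain ⟨x, _, hx1, hx2⟩ := this
  exact hx2 (interior_subset hx1)
end

section
/- For n ≥ 2 and any nonempty compact subset K of ℝⁿ, the space ℝⁿ \ K is not homeomorphic to ℝⁿ. -/
open Metric Set Filter Topology

/-- Complement of a closed ball is path-connected in rank > 1. -/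
lemma auxW {E : Type*} [NormedAddCommGroup E] [NormedSpace ℝ E]
    (h : 1 < Module.rank ℝ E) {r : ℝ} (hr : 0 ≤ r) :
    IsPathConnected ((Metric.closedBall (0 : E) r)ᶜ) := by
  have hnt : Nontrivial E := by
    rcases subsingleton_or_nontrivial E with hs | hs
    · exfalso
      have : Module.rank ℝ E = 0 := rank_subsingleton' ℝ E
      rw [this] at h; exact absurd h (by simp)
    · exact hs
  obtain ⟨x₀, hx₀⟩ := exists_norm_eq E (show (0:ℝ) ≤ r + 1 by linarith)
  have hx₀W : x₀ ∈ (Metric.closedBall (0 : E) r)ᶜ := by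
    simp only [mem_compl_iff, Metric.mem_closedBall, dist_zero_right, not_le, hx₀]
    linarith
  refine ⟨x₀, hx₀W, ?_⟩
  intro y hy
  have hyn : r < ‖y‖ := by
    simpa only [mem_compl_iff, Metric.mem_closedBall, dist_zero_right, not_le] using hy
  have hxn : r < ‖x₀‖ := by rw [hx₀]; linarith
  -- radius to use for the sphere
  set r' : ℝ := max ‖x₀‖ ‖y‖ with hr'
  have hr'pos : 0 ≤ r' := le_trans (norm_nonneg x₀) (le_max_left _ _)
  have hrr' : r < r' := lt_of_lt_of_le hxn (le_max_left _ _)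
  -- the radial segment from a point z (with r < ‖z‖ ≤ r') to (r'/‖z‖) • z stays in W
  have key : ∀ z : E, r < ‖z‖ → ‖z‖ ≤ r' →
      JoinedIn ((Metric.closedBall (0 : E) r)ᶜ) z ((r' / ‖z‖) • z) := by
    intro z hz hz'
    have hzne : ‖z‖ ≠ 0 := ne_of_gt (lt_of_le_of_lt hr hz)
    have hc1 : (1 : ℝ) ≤ r' / ‖z‖ := (one_le_div (by positivity)).2 hz'
    have hseg : segment ℝ z ((r' / ‖z‖) • z) ⊆ (Metric.closedBall (0 : E) r)ᶜ := by
      rintro p hp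
      rcases hp with ⟨a, b, ha, hb, hab, rfl⟩
      have : a • z + b • ((r' / ‖z‖) • z) = (a + b * (r' / ‖z‖)) • z := by
        rw [smul_smul, add_smul]
      rw [this]
      have h1 : (1 : ℝ) ≤ a + b * (r' / ‖z‖) := by nlinarith
      simp only [mem_compl_iff, Metric.mem_closedBall, dist_zero_right, not_le, norm_smul,
        Real.norm_eq_abs]
      calc r < ‖z‖ := hz
        _ = 1 * ‖z‖ := (one_mul _).symm
        _ ≤ |a + b * (r' / ‖z‖)| * ‖z‖ := by
            apply mul_le_mul_of_nonneg_right _ (norm_nonneg z)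
            exact le_trans h1 (le_abs_self _)
    have : IsPathConnected (segment ℝ z ((r' / ‖z‖) • z)) :=
      (convex_segment _ _).isPathConnected ⟨z, left_mem_segment ℝ _ _⟩
    exact (this.joinedIn z (left_mem_segment ℝ _ _) _ (right_mem_segment ℝ _ _)).mono hseg
  have hx' := key x₀ hxn (le_max_left _ _)
  have hy' := key y hyn (le_max_right _ _)
  -- the two endpoints are on the sphere of radius r'
  have hsphere : IsPathConnected (Metric.sphere (0 : E) r') := isPathConnected_sphere h 0 hr'pos
  have hmemx : (r' / ‖x₀‖) • x₀ ∈ Metric.sphere (0 : E) r' := by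
    simp only [Metric.mem_sphere, dist_zero_right, norm_smul, Real.norm_eq_abs]
    rw [abs_of_nonneg (by positivity), div_mul_cancel₀ _ (ne_of_gt (lt_of_le_of_lt hr hxn))]
  have hmemy : (r' / ‖y‖) • y ∈ Metric.sphere (0 : E) r' := by
    simp only [Metric.mem_sphere, dist_zero_right, norm_smul, Real.norm_eq_abs]
    rw [abs_of_nonneg (by positivity), div_mul_cancel₀ _ (ne_of_gt (lt_of_le_of_lt hr hyn))]
  have hsub : Metric.sphere (0 : E) r' ⊆ (Metric.closedBall (0 : E) r)ᶜ := by
    intro p hp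
    simp only [Metric.mem_sphere, dist_zero_right] at hp
    simp only [mem_compl_iff, Metric.mem_closedBall, dist_zero_right, not_le, hp]
    exact hrr'
  have hmid : JoinedIn ((Metric.closedBall (0 : E) r)ᶜ) ((r' / ‖x₀‖) • x₀) ((r' / ‖y‖) • y) :=
    (hsphere.joinedIn _ hmemx _ hmemy).mono hsub
  exact (hx'.trans hmid).trans hy'.symm

/-- For n ≥ 2 and any nonempty compact K ⊆ ℝⁿ, ℝⁿ \ K is not homeomorphic to ℝⁿ. -/
theorem stmt_7 (n : ℕ) (hn : 2 ≤ n) (K : Set (EuclideanSpace ℝ (Fin n)))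
    (hK : IsCompact K) (hKne : K.Nonempty) :
    IsEmpty ((Kᶜ : Set (EuclideanSpace ℝ (Fin n))) ≃ₜ EuclideanSpace ℝ (Fin n)) := by
  constructor
  intro h
  haveI : NeZero n := ⟨by omega⟩
  have hrank : 1 < Module.rank ℝ (EuclideanSpace ℝ (Fin n)) := by
    have h1 : Module.finrank ℝ (EuclideanSpace ℝ (Fin n)) = n := finrank_euclideanSpace_fin
    have h2 : (Module.finrank ℝ (EuclideanSpace ℝ (Fin n)) : Cardinal) = Module.rank ℝ (EuclideanSpace ℝ (Fin n)) := Module.finrank_eq_rank ℝ (EuclideanSpace ℝ (Fin n))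
    rw [← h2, h1]
    exact_mod_cast lt_of_lt_of_le one_lt_two (by exact_mod_cast hn)
  -- frontier of K is nonempty
  have hKne_univ : K ≠ Set.univ := by
    intro heq
    have : IsCompact (Set.univ : Set (EuclideanSpace ℝ (Fin n))) := heq ▸ hK
    exact (not_compactSpace_iff.2 inferInstance) (isCompact_univ_iff.1 this)
  obtain ⟨k, hkf⟩ : (frontier K).Nonempty := by
    by_contra hfe
    rw [Set.not_nonempty_iff_eq_empty] at hfe
    have : IsClopen K := isClopen_iff_frontier_eq_empty.2 hfe
    rcases isClopen_iff.1 this with h1 | h1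
    · exact hKne.ne_empty h1
    · exact hKne_univ h1
  have hkK : k ∈ K := hK.isClosed.closure_eq ▸ hkf.1
  have hkcl : k ∈ closure Kᶜ := by
    rw [closure_compl]
    exact fun hi => hkf.2 hi
  -- enclosing ball
  obtain ⟨R, hRpos, hKR⟩ := hK.isBounded.subset_ball_lt 0 0
  have hkR : ‖k‖ < R := by
    have := hKR hkK
    simpa [dist_zero_right] using this
  -- sphere S inside Kᶜ
  have hS : Metric.sphere (0 : (EuclideanSpace ℝ (Fin n))) R ⊆ Kᶜ := by
    intro p hp
    intro hpK
    have := hKR hpK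
    simp only [Metric.mem_ball, Metric.mem_sphere] at this hp
    linarith
  set C : Set (Kᶜ : Set (EuclideanSpace ℝ (Fin n))) := Subtype.val ⁻¹' (Metric.sphere (0 : (EuclideanSpace ℝ (Fin n))) R) with hC
  have hCcomp : IsCompact C := by
    rw [IsEmbedding.subtypeVal.isCompact_iff]
    have : Subtype.val '' C = Metric.sphere (0 : (EuclideanSpace ℝ (Fin n))) R := by
      rw [hC, Subtype.image_preimage_coe]
      exact Set.inter_eq_right.2 hS
    rw [this]
    exact isCompact_sphere 0 R
  -- bound for the image of C under h
  obtain ⟨R', hR'pos, hR'⟩ := (hCcomp.image h.continuous).isBounded.subset_ball_lt 0 0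
  -- the connected set A
  have hWpc : IsPathConnected ((Metric.closedBall (0 : (EuclideanSpace ℝ (Fin n))) R')ᶜ) := auxW hrank hR'pos.le
  set A : Set (Kᶜ : Set (EuclideanSpace ℝ (Fin n))) := h ⁻¹' ((Metric.closedBall (0 : (EuclideanSpace ℝ (Fin n))) R')ᶜ) with hA
  have hApre : IsPreconnected A := by
    have : A = h.symm '' ((Metric.closedBall (0 : (EuclideanSpace ℝ (Fin n))) R')ᶜ) := by
      rw [hA, ← Homeomorph.image_symm]
    rw [this]
    exact hWpc.isConnected.isPreconnected.image _ h.symm.continuous.continuousOn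
  -- open sets U and V
  set U : Set (Kᶜ : Set (EuclideanSpace ℝ (Fin n))) := Subtype.val ⁻¹' (Metric.ball (0 : (EuclideanSpace ℝ (Fin n))) R) with hU
  set V : Set (Kᶜ : Set (EuclideanSpace ℝ (Fin n))) := Subtype.val ⁻¹' ((Metric.closedBall (0 : (EuclideanSpace ℝ (Fin n))) R)ᶜ) with hV
  have hUopen : IsOpen U := Metric.isOpen_ball.preimage continuous_subtype_val
  have hVopen : IsOpen V := Metric.isClosed_closedBall.isOpen_compl.preimage continuous_subtype_val
  have hUV : U ∩ V = ∅ := by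
    ext p
    simp only [hU, hV, Set.mem_inter_iff, Set.mem_preimage, Metric.mem_ball, mem_compl_iff,
      Metric.mem_closedBall, Set.mem_empty_iff_false, iff_false]
    rintro ⟨h1, h2⟩
    exact h2 h1.le
  have hAUV : A ⊆ U ∪ V := by
    intro p hp
    have hpA : R' < ‖(h p : (EuclideanSpace ℝ (Fin n)))‖ := by
      have := hp
      simp only [hA, Set.mem_preimage, mem_compl_iff, Metric.mem_closedBall,
        dist_zero_right, not_le] at this
      exact this
    have hpnS : (p : (EuclideanSpace ℝ (Fin n))) ∉ Metric.sphere (0 : (EuclideanSpace ℝ (Fin n))) R := by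
      intro hps
      have : h p ∈ h '' C := ⟨p, hps, rfl⟩
      have := hR' this
      simp only [Metric.mem_ball, dist_zero_right] at this
      linarith
    simp only [Metric.mem_sphere, dist_zero_right] at hpnS
    rcases lt_or_gt_of_ne hpnS with h1 | h1
    · left; simp only [hU, Set.mem_preimage, Metric.mem_ball, dist_zero_right]; exact h1
    · right; simp only [hV, Set.mem_preimage, mem_compl_iff, Metric.mem_closedBall,
        dist_zero_right, not_le]; exact h1
  -- sequence approaching k from Kᶜ
  obtain ⟨x, hxmem, hxlim⟩ := mem_closure_iff_seq_limit.1 hkcl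
  set X : ℕ → (Kᶜ : Set (EuclideanSpace ℝ (Fin n))) := fun i => ⟨x i, hxmem i⟩ with hX
  -- sequence going to infinity
  have hnonempty : Nonempty (Fin n) := ⟨⟨0, by omega⟩⟩
  set e : (EuclideanSpace ℝ (Fin n)) := EuclideanSpace.single (Classical.arbitrary (Fin n)) (1 : ℝ) with he
  have hne : ‖e‖ = 1 := by
    rw [he, EuclideanSpace.norm_single, norm_one]
  set y : ℕ → (EuclideanSpace ℝ (Fin n)) := fun i => (R + 1 + i) • e with hy
  have hyn : ∀ i, ‖y i‖ = R + 1 + i := by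
    intro i
    rw [hy]
    simp only [norm_smul, hne, mul_one, Real.norm_eq_abs]
    rw [abs_of_nonneg]
    have : (0:ℝ) ≤ i := Nat.cast_nonneg i
    linarith
  have hymem : ∀ i, y i ∈ Kᶜ := by
    intro i
    intro hyK
    have := hKR hyK
    simp only [Metric.mem_ball, dist_zero_right] at this
    rw [hyn i] at this
    have : (0:ℝ) ≤ i := Nat.cast_nonneg i
    linarith [hyn i]
  set Y : ℕ → (Kᶜ : Set (EuclideanSpace ℝ (Fin n))) := fun i => ⟨y i, hymem i⟩ with hY
  -- X tends to cocompact
  have hXcc : Tendsto X atTop (cocompact (Kᶜ : Set (EuclideanSpace ℝ (Fin n)))) := by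
    rw [hasBasis_cocompact.tendsto_right_iff]
    intro C' hC'
    have hC'img : IsCompact (Subtype.val '' C') := hC'.image continuous_subtype_val
    have hknot : k ∉ Subtype.val '' C' := by
      rintro ⟨p, _, rfl⟩
      exact p.2 hkK
    have : (Subtype.val '' C')ᶜ ∈ 𝓝 k := hC'img.isClosed.isOpen_compl.mem_nhds hknot
    filter_upwards [hxlim.eventually_mem this] with i hi hiC'
    exact hi ⟨X i, hiC', rfl⟩
  -- Y tends to cocompact
  have hYcc : Tendsto Y atTop (cocompact (Kᶜ : Set (EuclideanSpace ℝ (Fin n)))) := by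
    rw [hasBasis_cocompact.tendsto_right_iff]
    intro C' hC'
    have hC'img : IsCompact (Subtype.val '' C') := hC'.image continuous_subtype_val
    obtain ⟨M, hM⟩ := hC'img.isBounded.subset_closedBall 0
    have : ∀ᶠ i in atTop, M < ‖y i‖ := by
      have : Tendsto (fun i : ℕ => R + 1 + (i : ℝ)) atTop atTop :=
        tendsto_atTop_add_const_left _ _ tendsto_natCast_atTop_atTop
      filter_upwards [this.eventually_gt_atTop M] with i hi
      rw [hyn i]; exact hi
    filter_upwards [this] with i hi hiC'
    have := hM ⟨Y i, hiC', rfl⟩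
    simp only [Metric.mem_closedBall, dist_zero_right] at this
    linarith
  -- compose with h to get to cocompact (EuclideanSpace ℝ (Fin n)) = cobounded (EuclideanSpace ℝ (Fin n))
  have hhmap : Tendsto h (cocompact (Kᶜ : Set (EuclideanSpace ℝ (Fin n)))) (cocompact (EuclideanSpace ℝ (Fin n))) :=
    le_of_eq h.map_cocompact
  have hcobd : (cocompact (EuclideanSpace ℝ (Fin n))) = Bornology.cobounded (EuclideanSpace ℝ (Fin n)) := Metric.cobounded_eq_cocompact.symm
  have hball : (Metric.closedBall (0 : (EuclideanSpace ℝ (Fin n))) R')ᶜ ∈ cocompact (EuclideanSpace ℝ (Fin n)) := by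
    rw [hcobd]
    exact (hasBasis_cobounded_compl_closedBall (0 : (EuclideanSpace ℝ (Fin n)))).mem_of_mem trivial
  have hXA : ∀ᶠ i in atTop, X i ∈ A :=
    (hhmap.comp hXcc).eventually_mem hball
  have hYA : ∀ᶠ i in atTop, Y i ∈ A :=
    (hhmap.comp hYcc).eventually_mem hball
  -- X i eventually in U
  have hXU : ∀ᶠ i in atTop, X i ∈ U := by
    have : Metric.ball (0 : (EuclideanSpace ℝ (Fin n))) R ∈ 𝓝 k := Metric.isOpen_ball.mem_nhds (by
      simp only [Metric.mem_ball, dist_zero_right]; exact hkR)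
    filter_upwards [hxlim.eventually_mem this] with i hi
    exact hi
  -- Y i always in V
  have hYV : ∀ i, Y i ∈ V := by
    intro i
    simp only [hV, Set.mem_preimage, mem_compl_iff, Metric.mem_closedBall, dist_zero_right, not_le]
    rw [hyn i]
    have : (0:ℝ) ≤ i := Nat.cast_nonneg i
    linarith
  obtain ⟨i, hiA, hiU⟩ := (hXA.and hXU).exists
  obtain ⟨j, hjA⟩ := hYA.exists
  have := hApre U V hUopen hVopen hAUV ⟨X i, hiA, hiU⟩ ⟨Y j, hjA, hYV j⟩
  rcases this with ⟨p, -, hpUV⟩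
  exact (hUV ▸ hpUV : p ∈ (∅ : Set _)).elim
end

section
/- Let X be a Hausdorff locally compact space which is the topological sum of a family (X_λ)_{λ∈Λ} of nonempty clopen subspaces. If Λ is infinite, or if at least two of the X_λ are non-compact, then X is not connected near infinity. -/
/-- Only finitely many pieces of a disjoint clopen cover can meet a compact set. -/
lemma finite_meets {X : Type*} [TopologicalSpace X] {Λ : Type*} (Xl : Λ → Set X)
    (hclopen : ∀ l, IsClopen (Xl l)) (hdisj : Pairwise (Function.onFun Disjoint Xl))
    (hcover : ⋃ l, Xl l = Set.univ) {C : Set X} (hC : IsCompact C) :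
    {l | (Xl l ∩ C).Nonempty}.Finite := by
  obtain ⟨t, ht⟩ := hC.elim_finite_subcover Xl (fun l => (hclopen l).isOpen)
    (by rw [hcover]; exact Set.subset_univ _)
  apply Set.Finite.subset t.finite_toSet
  rintro l ⟨x, hxl, hxC⟩
  obtain ⟨l', hl't, hxl'⟩ := Set.mem_iUnion₂.mp (ht hxC)
  rcases eq_or_ne l l' with rfl | hne
  · exact hl't
  · exact absurd hxl' (Set.disjoint_left.mp (hdisj hne) hxl)

/-- A topological sum of nonempty clopen pieces with infinitely many summands,
or at least two non-compact summands, is not connected near infinity. -/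
theorem stmt_11 {X : Type*} [TopologicalSpace X] [T2Space X] [LocallyCompactSpace X]
    {Λ : Type*} (Xl : Λ → Set X)
    (hclopen : ∀ l, IsClopen (Xl l)) (hdisj : Pairwise (Function.onFun Disjoint Xl))
    (hcover : ⋃ l, Xl l = Set.univ) (hne : ∀ l, (Xl l).Nonempty)
    (h : Infinite Λ ∨ ∃ l₁ l₂, l₁ ≠ l₂ ∧ ¬ IsCompact (Xl l₁) ∧ ¬ IsCompact (Xl l₂)) :
    ¬ ConnectedNearInfinity X := by
  intro hCNI
  obtain ⟨B, -, hBc, hBconn⟩ := hCNI ∅ (by simp [closure_empty])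
  set C := closure B with hCdef
  rcases Set.eq_empty_or_nonempty Bᶜ with hBe | ⟨x, hx⟩
  · -- B = univ, so X is compact
    have hBuniv : B = Set.univ := by
      rw [← Set.compl_empty_iff]; exact hBe
    have hXc : IsCompact (Set.univ : Set X) := by
      have : C = Set.univ := by
        apply Set.eq_univ_of_univ_subset; rw [← hBuniv]; exact subset_closure
      rwa [← this]
    have : CompactSpace X := isCompact_univ_iff.mp hXc
    rcases h with hinf | ⟨l₁, l₂, hne12, hc1, hc2⟩
    · have hfin := finite_meets Xl hclopen hdisj hcover hXc
      have : (Set.univ : Set Λ).Finite := by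
        apply hfin.subset
        intro l _
        obtain ⟨y, hy⟩ := hne l
        exact ⟨y, hy, Set.mem_univ y⟩
      exact Set.infinite_univ this
    · exact hc1 ((hclopen l₁).isClosed.isCompact)
  · -- Bᶜ nonempty; it lies in a single piece Xl l₀
    obtain ⟨l₀, hxl₀⟩ := Set.mem_iUnion.mp (hcover ▸ Set.mem_univ x)
    have hsub : Bᶜ ⊆ Xl l₀ :=
      hBconn.subset_isClopen (hclopen l₀) ⟨x, hx, hxl₀⟩
    have hpiece : ∀ l, l ≠ l₀ → Xl l ⊆ C := by
      intro l hl a ha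
      by_cases haB : a ∈ B
      · exact subset_closure haB
      · exact absurd (hsub haB) (Set.disjoint_left.mp (hdisj hl) ha)
    rcases h with hinf | ⟨l₁, l₂, hne12, hc1, hc2⟩
    · have hfin := finite_meets Xl hclopen hdisj hcover hBc
      have : (Set.univ : Set Λ).Finite := by
        apply ((hfin.insert l₀).subset)
        intro l _
        rcases eq_or_ne l l₀ with rfl | hl
        · exact Set.mem_insert _ _
        · obtain ⟨y, hy⟩ := hne l
          exact Set.mem_insert_of_mem _ ⟨y, hy, hpiece l hl hy⟩
      exact Set.infinite_univ this
    · have key : ∀ l, l ≠ l₀ → IsCompact (Xl l) := fun l hl =>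
        hBc.of_isClosed_subset (hclopen l).isClosed (hpiece l hl)
      rcases eq_or_ne l₁ l₀ with rfl | h1
      · exact hc2 (key l₂ (Ne.symm hne12))
      · exact hc1 (key l₁ h1)
end

section
/- Let X be a Hausdorff locally compact space that is m-disconnected near infinity for some natural number m, and let C ⊆ X be compact and not open. Then Y = X \ C is not m-disconnected near infinity, and hence not homeomorphic to X. -/
/-- A space is m-disconnected near infinity if every punctured neighborhood of
the point at infinity (set with compact complement) contains one with exactly
m+1 connected components, and m is minimal with this property. -/
def MDisconnectedNearInfinity (X : Type*) [TopologicalSpace X] (m : ℕ) : Prop :=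
  (∀ P : Set X, IsCompact Pᶜ → ∃ Q : Set X, Q ⊆ P ∧ IsCompact Qᶜ ∧
      Nat.card (ConnectedComponents Q) = m + 1) ∧
  ∀ k : ℕ, k < m → ¬ (∀ P : Set X, IsCompact Pᶜ → ∃ Q : Set X, Q ⊆ P ∧ IsCompact Qᶜ ∧
      Nat.card (ConnectedComponents Q) = k + 1)

section Aux

open Set Topology

open Set Topology

variable {A B : Type*} [TopologicalSpace A] [TopologicalSpace B]

/-- Map on connected components induced by a continuous map. -/
noncomputable def ccMap (f : A → B) (hf : Continuous f) :
    ConnectedComponents A → ConnectedComponents B :=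
  (ConnectedComponents.continuous_coe.comp hf).connectedComponentsLift

lemma ccMap_mk (f : A → B) (hf : Continuous f) (a : A) :
    ccMap f hf (ConnectedComponents.mk a) = ConnectedComponents.mk (f a) := rfl

/-- Equivalence of connected components induced by a homeomorphism. -/
noncomputable def ccEquiv (e : A ≃ₜ B) : ConnectedComponents A ≃ ConnectedComponents B where
  toFun := ccMap e e.continuous
  invFun := ccMap e.symm e.symm.continuous
  left_inv := by
    intro c
    obtain ⟨a, rfl⟩ := ConnectedComponents.surjective_coe c
    show ccMap _ _ (ccMap _ _ (ConnectedComponents.mk a)) = _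
    rw [ccMap_mk, ccMap_mk, e.symm_apply_apply]
  right_inv := by
    intro c
    obtain ⟨b, rfl⟩ := ConnectedComponents.surjective_coe c
    show ccMap _ _ (ccMap _ _ (ConnectedComponents.mk b)) = _
    rw [ccMap_mk, ccMap_mk, e.apply_symm_apply]

/-- First half of the m-disconnectedness condition, for a single cardinal. -/
def NearInfCond (X : Type*) [TopologicalSpace X] (k : ℕ) : Prop :=
  ∀ P : Set X, IsCompact Pᶜ → ∃ Q : Set X, Q ⊆ P ∧ IsCompact Qᶜ ∧
      Nat.card (ConnectedComponents Q) = k + 1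

lemma nearInfCond_transfer (e : A ≃ₜ B) {k : ℕ} (h : NearInfCond B k) : NearInfCond A k := by
  intro P hP
  obtain ⟨QB, hQBsub, hQBc, hQBcard⟩ := h (e.symm ⁻¹' P) (by
    rw [← Set.preimage_compl]
    exact e.symm.isCompact_preimage.2 hP)
  refine ⟨e ⁻¹' QB, ?_, ?_, ?_⟩
  · intro a ha
    have := hQBsub ha
    simpa using this
  · rw [← Set.preimage_compl]
    exact e.isCompact_preimage.2 hQBc
  · have h1 : e '' (e ⁻¹' QB) = QB := Set.image_preimage_eq QB e.surjective
    have h2 : (↥(e ⁻¹' QB)) ≃ₜ ↥QB := (e.image (e ⁻¹' QB)).trans (Homeomorph.setCongr h1)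
    rw [Nat.card_congr (ccEquiv h2), hQBcard]


section Main
variable {X : Type*} [TopologicalSpace X] [T2Space X] [LocallyCompactSpace X]

lemma main_notMDisc (m : ℕ)
    (hX1 : NearInfCond X m) (hX2 : ∀ k : ℕ, k < m → ¬ NearInfCond X k)
    (C : Set X) (hC : IsCompact C) (hCo : ¬ IsOpen C) :
    ¬ NearInfCond (Cᶜ : Set X) m := by
  intro hY
  classical
  -- X is noncompact
  have hXnc : ¬ IsCompact (Set.univ : Set X) := by
    intro h
    obtain ⟨Q, hQsub, -, hQcard⟩ := hX1 ∅ (by simpa using h)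
    rw [Set.subset_empty_iff] at hQsub
    subst hQsub
    have hpos : 0 < Nat.card (ConnectedComponents (∅ : Set X)) := by rw [hQcard]; omega
    rcases Nat.card_pos_iff.mp hpos with ⟨⟨c⟩, -⟩
    obtain ⟨a, -⟩ := ConnectedComponents.surjective_coe c
    exact a.2
  -- boundary point of C
  obtain ⟨x, hxC, hxcl⟩ : ∃ x, x ∈ C ∧ x ∈ closure Cᶜ := by
    by_contra h
    push_neg at h
    apply hCo
    have hsub : C ⊆ interior C := by
      intro z hz
      have := h z hz
      rw [closure_compl] at this
      simpa using this
    have : interior C = C := interior_subset.antisymm hsub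
    rw [← this]; exact isOpen_interior
  -- bad sets from minimality of m for X
  have hbad : ∀ k, k < m → ∃ P : Set X, IsCompact Pᶜ ∧
      ∀ Q : Set X, Q ⊆ P → IsCompact Qᶜ → Nat.card (ConnectedComponents Q) ≠ k + 1 := by
    intro k hk
    have h := hX2 k hk
    unfold NearInfCond at h
    push_neg at h
    obtain ⟨P, hP1, hP2⟩ := h
    exact ⟨P, hP1, hP2⟩
  choose Pb hPb1 hPb2 using hbad
  set Pb' : ℕ → Set X := fun k => if h : k < m then Pb k h else Set.univ with hPb'
  set Pstar : Set X := ⋂ k ∈ Set.Iio m, Pb' k with hPstar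
  have hPstarc : IsCompact Pstarᶜ := by
    rw [hPstar, Set.compl_iInter₂]
    refine (Set.finite_Iio m).isCompact_biUnion ?_
    intro k hk
    simp only [Set.mem_Iio] at hk
    simp only [hPb', dif_pos hk]
    exact hPb1 k hk
  have hPstarsub : ∀ k (hk : k < m), Pstar ⊆ Pb k hk := by
    intro k hk
    have h1 : Pstar ⊆ Pb' k := Set.biInter_subset_of_mem (Set.mem_Iio.mpr hk)
    simp only [hPb', dif_pos hk] at h1
    exact h1
  -- compact neighborhoods
  obtain ⟨K₀, hK₀c, hK₀⟩ := exists_compact_superset (hC.union hPstarc)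
  obtain ⟨K₁, hK₁c, hK₁⟩ := exists_compact_superset hK₀c
  have hCK₀ : C ⊆ interior K₀ := (Set.subset_union_left (t := Pstarᶜ)).trans hK₀
  have hPK₀ : Pstarᶜ ⊆ interior K₀ := (Set.subset_union_right (s := C)).trans hK₀
  have hK₀K₁ : K₀ ⊆ K₁ := hK₁.trans interior_subset
  have hintK₀K₁ : interior K₀ ⊆ K₁ := interior_subset.trans hK₀K₁
  -- the compact "annulus" F inside Y
  set F : Set X := K₁ \ interior K₀ with hF
  have hFc : IsCompact F := hK₁c.diff isOpen_interior
  have hFY : F ⊆ Cᶜ := fun z hz hzC => hz.2 (hCK₀ hzC)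
  set FY : Set (Cᶜ : Set X) := Subtype.val ⁻¹' F with hFYdef
  have hFYc : IsCompact FY := by
    rw [Subtype.isCompact_iff, Subtype.image_preimage_coe]
    have h2 : Cᶜ ∩ F = F := Set.inter_eq_right.mpr hFY
    rwa [h2]
  -- apply the condition for Y to the complement of FY
  obtain ⟨Q, hQsub, hQc, hQcard⟩ := hY FYᶜ (by rwa [compl_compl])
  -- dichotomy for points of Q
  have hdichot : ∀ q : (Cᶜ : Set X), q ∈ Q → ((q : X) ∈ interior K₀ ∨ (q : X) ∉ K₁) := by
    intro q hq
    by_cases h1 : (q : X) ∈ K₁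
    · left
      by_contra h0
      exact hQsub hq (show q ∈ FY from ⟨h1, h0⟩)
    · right; exact h1
  -- the clopen "outer" set
  set U : Set Q := {t | (t.1 : X) ∉ K₁} with hU
  have hpc : Continuous (fun t : Q => (t.1 : X)) :=
    continuous_subtype_val.comp continuous_subtype_val
  have hUopen : IsOpen U := by
    have hUeq : U = (fun t : Q => (t.1 : X)) ⁻¹' K₁ᶜ := rfl
    rw [hUeq]
    exact hK₁c.isClosed.isOpen_compl.preimage hpc
  have hUclosed : IsClosed U := by
    have hUc : Uᶜ = (fun t : Q => (t.1 : X)) ⁻¹' (interior K₀) := by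
      ext t
      simp only [hU, Set.mem_compl_iff, Set.mem_setOf_eq, not_not, Set.mem_preimage]
      constructor
      · intro h
        rcases hdichot t.1 t.2 with h' | h'
        · exact h'
        · exact absurd h h'
      · intro h
        exact hintK₀K₁ h
    rw [← isOpen_compl_iff, hUc]
    exact isOpen_interior.preimage hpc
  have hUclopen : IsClopen U := ⟨hUclosed, hUopen⟩
  -- the Boolean invariant on components
  have hgcont : Continuous U.boolIndicator := (continuous_boolIndicator_iff_isClopen U).2 hUclopen
  set g2 : ConnectedComponents Q → Bool := hgcont.connectedComponentsLift with hg2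
  have hg2mk : ∀ t : Q, g2 (ConnectedComponents.mk t) = U.boolIndicator t := fun t => rfl
  set S : Set (ConnectedComponents Q) := g2 ⁻¹' {true} with hS
  have hfin : Finite (ConnectedComponents Q) := by
    have hpos : 0 < Nat.card (ConnectedComponents Q) := by rw [hQcard]; omega
    exact (Nat.card_pos_iff.mp hpos).2
  -- complement of the image of Q in X
  set QX : Set X := Subtype.val '' Q with hQX
  have hQXsub : QX ⊆ Cᶜ := Subtype.coe_image_subset _ _
  have hQcC : IsCompact (Subtype.val '' (Qᶜ : Set (Cᶜ : Set X))) := Subtype.isCompact_iff.mp hQc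
  have hQXcompl : QXᶜ = C ∪ Subtype.val '' (Qᶜ : Set (Cᶜ : Set X)) := by
    ext z
    by_cases hz : z ∈ C
    · simp only [Set.mem_compl_iff, Set.mem_union]
      exact ⟨fun _ => Or.inl hz, fun _ hzQ => (hQXsub hzQ) hz⟩
    · simp only [Set.mem_compl_iff, Set.mem_union]
      constructor
      · intro h
        right
        exact ⟨⟨z, hz⟩, fun hq => h ⟨⟨z, hz⟩, hq, rfl⟩, rfl⟩
      · rintro (h | ⟨w, hw, rfl⟩) hzQ
        · exact hz h
        · obtain ⟨w', hw', hww⟩ := hzQ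
          exact hw (Subtype.ext hww ▸ hw')
  have hQXcomplc : IsCompact QXᶜ := by rw [hQXcompl]; exact hC.union hQcC
  -- outer part is nonempty (X noncompact)
  have hUne : U.Nonempty := by
    by_contra h
    rw [Set.not_nonempty_iff_eq_empty] at h
    have hQK : QX ⊆ K₁ := by
      rintro z ⟨q, hq, rfl⟩
      by_contra hzK
      have : (⟨q, hq⟩ : Q) ∈ U := hzK
      rw [h] at this
      exact this
    apply hXnc
    apply (hK₁c.union hQXcomplc).of_isClosed_subset isClosed_univ
    intro z _
    by_cases hzQ : z ∈ QX
    · exact Or.inl (hQK hzQ)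
    · exact Or.inr hzQ
  -- inner part is nonempty (boundary point of C)
  obtain ⟨t₀, ht₀⟩ : ∃ t : Q, (t.1 : X) ∈ K₁ := by
    have hW : IsOpen (interior K₀ ∩ (Subtype.val '' (Qᶜ : Set (Cᶜ : Set X)))ᶜ) :=
      isOpen_interior.inter hQcC.isClosed.isOpen_compl
    have hxW : x ∈ interior K₀ ∩ (Subtype.val '' (Qᶜ : Set (Cᶜ : Set X)))ᶜ := by
      refine ⟨hCK₀ hxC, ?_⟩
      rintro ⟨w, -, rfl⟩
      exact w.2 hxC
    obtain ⟨y, ⟨hyK, hyQc⟩, hyC⟩ := mem_closure_iff.mp hxcl _ hW hxW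
    have hyQ : (⟨y, hyC⟩ : (Cᶜ : Set X)) ∈ Q := by
      by_contra hq
      exact hyQc ⟨⟨y, hyC⟩, hq, rfl⟩
    exact ⟨⟨⟨y, hyC⟩, hyQ⟩, hintK₀K₁ hyK⟩
  have hSne : S.Nonempty := by
    obtain ⟨t, ht⟩ := hUne
    refine ⟨ConnectedComponents.mk t, ?_⟩
    simp only [hS, Set.mem_preimage, Set.mem_singleton_iff, hg2mk]
    exact (U.mem_iff_boolIndicator t).mp ht
  have hScne : Sᶜ.Nonempty := by
    refine ⟨ConnectedComponents.mk t₀, ?_⟩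
    simp only [hS, Set.mem_compl_iff, Set.mem_preimage, Set.mem_singleton_iff, hg2mk]
    have ht₀U : t₀ ∉ U := fun h => h ht₀
    rw [(U.notMem_iff_boolIndicator t₀).mp ht₀U]
    simp
  -- counting
  have hcardsplit : S.ncard + Sᶜ.ncard = m + 1 := by
    rw [Set.ncard_add_ncard_compl]
    rw [← hQcard]
  set j : ℕ := S.ncard with hj
  have hj1 : 1 ≤ j := (Set.ncard_pos (Set.toFinite S)).mpr hSne
  have hjm : j ≤ m := by
    have h2 : 0 < Sᶜ.ncard := (Set.ncard_pos (Set.toFinite Sᶜ)).mpr hScne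
    omega
  -- the outer punctured neighborhood of infinity in X
  set Q' : Set X := QX \ K₁ with hQ'
  have hQ'sub : Q' ⊆ Pstar := by
    intro z hz
    by_contra hzP
    exact hz.2 (hintK₀K₁ (hPK₀ hzP))
  have hQ'c : IsCompact Q'ᶜ := by
    have heq : Q'ᶜ = QXᶜ ∪ K₁ := by
      rw [hQ', Set.diff_eq, Set.compl_inter, compl_compl]
    rw [heq]
    exact hQXcomplc.union hK₁c
  -- the inclusion map from Q' into Q
  have hQ'memC : ∀ z ∈ Q', z ∈ (Cᶜ : Set X) := fun z hz => hQXsub hz.1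
  have hmemQ : ∀ (z : X) (hz : z ∈ Q'), (⟨z, hQ'memC z hz⟩ : (Cᶜ : Set X)) ∈ Q := by
    intro z hz
    obtain ⟨q, hq, hqz⟩ := hz.1
    have h3 : (⟨z, hQ'memC z hz⟩ : (Cᶜ : Set X)) = q := Subtype.ext hqz.symm
    rw [h3]
    exact hq
  set ι : Q' → Q := fun a => ⟨⟨a.1, hQ'memC a.1 a.2⟩, hmemQ a.1 a.2⟩ with hι
  have hιcont : Continuous ι :=
    (continuous_subtype_val.subtype_mk _).subtype_mk _
  have hφ0 : Continuous (fun a : Q' => ConnectedComponents.mk (ι a)) :=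
    ConnectedComponents.continuous_coe.comp hιcont
  set φ : ConnectedComponents Q' → ConnectedComponents Q := hφ0.connectedComponentsLift with hφ
  have hφmk : ∀ a : Q', φ (ConnectedComponents.mk a) = ConnectedComponents.mk (ι a) :=
    fun a => rfl
  have hιU : ∀ a : Q', ι a ∈ U := fun a => a.2.2
  have hφS : ∀ c, φ c ∈ S := by
    intro c
    obtain ⟨a, rfl⟩ := ConnectedComponents.surjective_coe c
    simp only [hS, hφmk, Set.mem_preimage, Set.mem_singleton_iff, hg2mk]
    exact (U.mem_iff_boolIndicator (ι a)).mp (hιU a)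
  set ψ : ConnectedComponents Q' → S := fun c => ⟨φ c, hφS c⟩ with hψ
  have hψinj : Function.Injective ψ := by
    intro c₁ c₂ hcc
    obtain ⟨a, rfl⟩ := ConnectedComponents.surjective_coe c₁
    obtain ⟨b, rfl⟩ := ConnectedComponents.surjective_coe c₂
    have heq : ConnectedComponents.mk (ι a) = ConnectedComponents.mk (ι b) := by
      have := congrArg Subtype.val hcc
      simpa [hψ, hφmk] using this
    rw [ConnectedComponents.coe_eq_coe] at heq
    have hιb : ι b ∈ connectedComponent (ι a) := heq ▸ mem_connectedComponent
    set D := connectedComponent (ι a) with hD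
    have hDpc : IsPreconnected D := isPreconnected_connectedComponent
    have hDU : D ⊆ U := hDpc.subset_isClopen hUclopen ⟨ι a, mem_connectedComponent, hιU a⟩
    set p : Q → X := fun t => (t.1 : X) with hp
    have hppc : IsPreconnected (p '' D) := hDpc.image p hpc.continuousOn
    have hpD : p '' D ⊆ Q' := by
      rintro z ⟨t, htD, rfl⟩
      exact ⟨⟨t.1, t.2, rfl⟩, hDU htD⟩
    set E : Set Q' := Subtype.val ⁻¹' (p '' D) with hE
    have hvalE : Subtype.val '' E = p '' D := by
      rw [hE, Subtype.image_preimage_coe]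
      exact Set.inter_eq_right.mpr hpD
    have hEpc : IsPreconnected E := by
      rw [← IsInducing.subtypeVal.isPreconnected_image, hvalE]
      exact hppc
    have haE : a ∈ E := ⟨ι a, mem_connectedComponent, rfl⟩
    have hbE : b ∈ E := ⟨ι b, hιb, rfl⟩
    rw [ConnectedComponents.coe_eq_coe]
    have h1 : E ⊆ connectedComponent a := hEpc.subset_connectedComponent haE
    exact connectedComponent_eq (h1 hbE)
  have hψsurj : Function.Surjective ψ := by
    rintro ⟨c, hc⟩
    obtain ⟨t, rfl⟩ := ConnectedComponents.surjective_coe c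
    have htU : t ∈ U := by
      simp only [hS, Set.mem_preimage, Set.mem_singleton_iff, hg2mk] at hc
      exact (U.mem_iff_boolIndicator t).mpr hc
    have haQ' : (t.1 : X) ∈ Q' := ⟨⟨t.1, t.2, rfl⟩, htU⟩
    refine ⟨ConnectedComponents.mk ⟨(t.1 : X), haQ'⟩, ?_⟩
    apply Subtype.ext
    simp only [hψ]
    rw [hφmk]
  have hcardQ' : Nat.card (ConnectedComponents Q') = j := by
    rw [Nat.card_eq_of_bijective ψ ⟨hψinj, hψsurj⟩, Nat.card_coe_set_eq]
  -- final contradiction with the bad set for j-1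
  have hjm' : j - 1 < m := by omega
  exact hPb2 (j - 1) hjm' Q' (hQ'sub.trans (hPstarsub (j - 1) hjm')) hQ'c
    (by rw [hcardQ']; omega)

end Main

end Aux

/-- If X is locally compact Hausdorff and m-disconnected near infinity, and
C ⊆ X is compact not open, then Y = X \ C is not m-disconnected near infinity,
hence not homeomorphic to X. -/
theorem stmt_13 {X : Type*} [TopologicalSpace X] [T2Space X] [LocallyCompactSpace X]
    (m : ℕ) (hX : MDisconnectedNearInfinity X m)
    (C : Set X) (hC : IsCompact C) (hCo : ¬ IsOpen C) :
    ¬ MDisconnectedNearInfinity (Cᶜ : Set X) m ∧ IsEmpty ((Cᶜ : Set X) ≃ₜ X) := by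
  have h1 : ¬ MDisconnectedNearInfinity (Cᶜ : Set X) m := by
    intro hY
    exact main_notMDisc m hX.1 hX.2 C hC hCo hY.1
  refine ⟨h1, ⟨fun e => h1 ?_⟩⟩
  exact ⟨nearInfCond_transfer e hX.1, fun k hk hc => hX.2 k hk (nearInfCond_transfer e.symm hc)⟩
end

section
/- Let D be the open unit ball in ℝⁿ, n ≥ 2, and let a₁,…,a_p be p distinct points of D. Then X(p) = D \ {a₁,…,a_p} is p-disconnected near infinity. -/
/-!
Near infinity, `X = B \ {a₁, …, a_p}` looks like `p` punctured balls around the `aᵢ` together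
with a collar of the boundary sphere. For small `ε` these `p + 1` pieces are connected (as
`n ≥ 2`), open and pairwise disjoint, their union has compact complement in `X`, and every compact
subset of `X` misses them once `ε` is small enough. Hence every neighbourhood of infinity contains
the union of the pieces for some `ε`, which has exactly `p + 1` components; conversely a
neighbourhood of infinity inside the union for a fixed `ε₀` meets each of its `p + 1` disjoint open
pieces, so it has at least `p + 1` components.
-/

open Set Metric Filter Topology Function
open scoped Pointwise

section OpenPartition
variable {α ι : Type*} [TopologicalSpace α]

theorem isClopen_of_isOpen_of_iUnion_eq_univ {U : ι → Set α} (hopen : ∀ i, IsOpen (U i))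
    (hdisj : Pairwise (Disjoint on U)) (hunion : ⋃ i, U i = univ) (i : ι) : IsClopen (U i) := by
  refine ⟨?_, hopen i⟩
  rw [← isOpen_compl_iff, compl_eq_univ_sdiff, ← hunion, iUnion_sdiff]
  refine isOpen_iUnion fun j ↦ ?_
  rcases eq_or_ne i j with rfl | hij
  · simp
  · simpa only [(hdisj hij.symm).sdiff_eq_left] using hopen j

theorem isConnected_preimage_val {S s : Set α} (hsS : s ⊆ S) (hs : IsConnected s) :
    IsConnected ((↑) ⁻¹' s : Set S) := by
  rw [IsConnected, ← image_nonempty, ← IsInducing.subtypeVal.isPreconnected_image,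
    Subtype.image_preimage_coe, inter_eq_right.2 hsS]
  exact hs

variable {S : Set α} {D : ι → Set α}

noncomputable def connectedComponentsEquivSigmaOfSubsetIUnion (hopen : ∀ i, IsOpen (D i))
    (hdisj : Pairwise (Disjoint on D)) (hS : S ⊆ ⋃ i, D i) :
    ConnectedComponents S ≃ Σ i, ConnectedComponents ((↑) ⁻¹' D i : Set S) :=
  have hunion : ⋃ i, ((↑) ⁻¹' D i : Set S) = univ := by
    rwa [← preimage_iUnion, preimage_eq_univ_iff, Subtype.range_coe]
  ConnectedComponents.equivOfIsClopen
    (isClopen_of_isOpen_of_iUnion_eq_univ (fun i ↦ (hopen i).preimage continuous_subtype_val)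
      (fun i j hij ↦ (hdisj hij).preimage _) hunion)
    (fun i j hij ↦ (hdisj hij).preimage _) hunion

theorem natCard_connectedComponents_iUnion (hopen : ∀ i, IsOpen (D i))
    (hdisj : Pairwise (Disjoint on D)) (hconn : ∀ i, IsConnected (D i)) :
    Nat.card (ConnectedComponents ↥(⋃ i, D i)) = Nat.card ι := by
  have (i : ι) : ConnectedSpace ((↑) ⁻¹' D i : Set ↥(⋃ i, D i)) :=
    isConnected_iff_connectedSpace.mp (isConnected_preimage_val (subset_iUnion D i) (hconn i))
  have (i : ι) : Unique (ConnectedComponents ((↑) ⁻¹' D i : Set ↥(⋃ i, D i))) :=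
    (nonempty_unique _).some
  rw [Nat.card_congr (connectedComponentsEquivSigmaOfSubsetIUnion hopen hdisj subset_rfl)]
  exact Nat.card_congr (Equiv.sigmaUnique _ _)

theorem natCard_le_natCard_connectedComponents [Finite (ConnectedComponents S)]
    (hopen : ∀ i, IsOpen (D i)) (hdisj : Pairwise (Disjoint on D)) (hS : S ⊆ ⋃ i, D i)
    (hne : ∀ i, (S ∩ D i).Nonempty) :
    Nat.card ι ≤ Nat.card (ConnectedComponents S) := by
  have (i : ι) : Nonempty (ConnectedComponents ((↑) ⁻¹' D i : Set S)) := by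
    obtain ⟨x, hxS, hxD⟩ := hne i
    exact ⟨ConnectedComponents.mk ⟨⟨x, hxS⟩, hxD⟩⟩
  have hfst : Surjective (Sigma.fst : (Σ i, ConnectedComponents ((↑) ⁻¹' D i : Set S)) → ι) :=
    fun i ↦ ⟨⟨i, Classical.arbitrary _⟩, rfl⟩
  exact Nat.card_le_card_of_surjective _
    (hfst.comp (connectedComponentsEquivSigmaOfSubsetIUnion hopen hdisj hS).surjective)

end OpenPartition

theorem mDisconnectedNearInfinity_of_nested_partitions {Y ι β : Type*} [TopologicalSpace Y]
    {l : Filter β} [l.NeBot] {V : β → ι → Set Y} {m : ℕ} (hcard : Nat.card ι = m + 1)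
    (hopen : ∀ᶠ b in l, ∀ i, IsOpen (V b i))
    (hdisj : ∀ᶠ b in l, Pairwise (Disjoint on V b))
    (hconn : ∀ᶠ b in l, ∀ i, IsConnected (V b i))
    (hcompact : ∀ᶠ b in l, IsCompact (⋃ i, V b i)ᶜ)
    (hmono : ∀ᶠ b in l, ∀ᶠ b' in l, ∀ i, V b' i ⊆ V b i)
    (hexhaust : ∀ K, IsCompact K → ∀ᶠ b in l, Disjoint K (⋃ i, V b i)) :
    MDisconnectedNearInfinity Y m := by
  constructor
  · intro P hP
    obtain ⟨b, hbo, hbd, hbc, hbK, hbP⟩ :=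
      (hopen.and <| hdisj.and <| hconn.and <| hcompact.and <| hexhaust _ hP).exists
    refine ⟨⋃ i, V b i, ?_, hbK, ?_⟩
    · simpa using hbP.subset_compl_left
    · rw [natCard_connectedComponents_iUnion hbo hbd hbc, hcard]
  · intro k hk hall
    obtain ⟨b₀, hbo, hbd, hbK, hshrink⟩ := (hopen.and <| hdisj.and <| hcompact.and hmono).exists
    obtain ⟨Q, hQP, hQc, hQcard⟩ := hall _ hbK
    obtain ⟨b, hbc, hbsub, hbQ⟩ := (hconn.and <| hshrink.and <| hexhaust _ hQc).exists
    have : Finite (ConnectedComponents Q) := Nat.finite_of_card_ne_zero (by omega)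
    have hle := natCard_le_natCard_connectedComponents hbo hbd hQP fun i ↦ ?_
    · omega
    · obtain ⟨x, hx⟩ := (hbc i).nonempty
      have hxQ : x ∈ Q := by simpa using hbQ.subset_compl_left (mem_iUnion_of_mem i hx)
      exact ⟨x, hxQ, hbsub i hx⟩

theorem isConnected_ball_diff_closedBall {E : Type*} [NormedAddCommGroup E] [NormedSpace ℝ E]
    (hE : 1 < Module.rank ℝ E) (c : E) {α β : ℝ} (hα : 0 ≤ α) (hαβ : α < β) :
    IsConnected (ball c β \ closedBall c α) := by
  have hsmul : IsConnected (Ioo α β • sphere (0 : E) 1) := by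
    rw [← image2_smul, ← image_prod]
    exact ((isConnected_Ioo hαβ).prod (isConnected_sphere hE 0 zero_le_one)).image _
      (continuous_fst.smul continuous_snd).continuousOn
  rw [Ioo_smul_sphere_zero hα one_pos, mul_one, mul_one] at hsmul
  have := hsmul.image (c + ·) (continuous_const.add continuous_id).continuousOn
  rwa [image_add_left, preimage_sdiff, preimage_add_left_ball, preimage_add_left_closedBall,
    neg_neg, add_zero] at this

section PuncturedBall
variable {E ι : Type*} [MetricSpace E] (c : E) (r : ℝ) (a : ι → E)

def endPiece (ε : ℝ) : Option ι → Set E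
  | none => ball c r \ closedBall c (r - ε)
  | some i => ball (a i) ε \ {a i}

structure IsSeparatingRadius (ε : ℝ) : Prop where
  pos : 0 < ε
  lt_radius : ε < r
  dist_center_add_le : ∀ i, dist (a i) c + 2 * ε ≤ r
  le_dist : Pairwise fun i j ↦ 2 * ε ≤ dist (a i) (a j)

variable {c r a}

theorem isOpen_endPiece (ε : ℝ) (i : Option ι) : IsOpen (endPiece c r a ε i) := by
  cases i with
  | none => exact isOpen_ball.sdiff isClosed_closedBall
  | some i => exact isOpen_ball.sdiff isClosed_singleton

theorem endPiece_mono {ε ε' : ℝ} (h : ε' ≤ ε) (i : Option ι) :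
    endPiece c r a ε' i ⊆ endPiece c r a ε i := by
  cases i with
  | none => exact sdiff_subset_sdiff_right (closedBall_subset_closedBall (by linarith))
  | some i => exact sdiff_subset_sdiff_left (ball_subset_ball h)

theorem isCompact_diff_iUnion_endPiece [ProperSpace E] {ε : ℝ} (hε : 0 < ε) :
    IsCompact ((ball c r \ range a) \ ⋃ i, endPiece c r a ε i) := by
  have heq : (ball c r \ range a) \ ⋃ i, endPiece c r a ε i =
      closedBall c (r - ε) \ ⋃ i, ball (a i) ε := by
    ext x
    simp only [endPiece, Set.mem_sdiff, mem_ball, mem_closedBall, mem_range, mem_iUnion,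
      Option.exists, mem_singleton_iff, not_exists, not_or, not_and, not_lt, not_not]
    constructor
    · rintro ⟨⟨hxr, hxa⟩, hxc, hxi⟩
      exact ⟨hxc hxr, fun i ↦ not_lt.1 fun h ↦ hxa i (hxi i h).symm⟩
    · rintro ⟨hxc, hxi⟩
      refine ⟨⟨by linarith, fun i h ↦ ?_⟩, fun _ ↦ hxc, fun i h ↦ absurd h (not_lt.2 (hxi i))⟩
      have := hxi i
      rw [h, dist_self] at this
      linarith
  rw [heq]
  exact (isCompact_closedBall c _).diff (isOpen_iUnion fun i ↦ isOpen_ball)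

namespace IsSeparatingRadius
variable {ε : ℝ} (h : IsSeparatingRadius c r a ε)
include h

theorem pairwise_disjoint_endPiece : Pairwise (Disjoint on endPiece c r a ε) := by
  have hcollar (i : ι) : Disjoint (endPiece c r a ε (some i)) (endPiece c r a ε none) := by
    refine disjoint_left.2 fun x hx hx' ↦ hx'.2 ?_
    rw [mem_closedBall]
    linarith [dist_triangle x (a i) c, mem_ball.1 hx.1, h.dist_center_add_le i]
  rintro (_ | i) (_ | j) hij
  · exact absurd rfl hij
  · exact (hcollar j).symm
  · exact hcollar i
  · refine disjoint_left.2 fun x hx hx' ↦ ?_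
    have := h.le_dist (fun h ↦ hij (congrArg some h) : i ≠ j)
    linarith [dist_triangle_left (a i) (a j) x, mem_ball.1 hx.1, mem_ball.1 hx'.1]

theorem endPiece_subset (i : Option ι) : endPiece c r a ε i ⊆ ball c r \ range a := by
  cases i with
  | none =>
    rintro x ⟨hxr, hxε⟩
    refine ⟨hxr, ?_⟩
    rintro ⟨j, rfl⟩
    exact hxε (mem_closedBall.2 (by linarith [h.dist_center_add_le j, h.pos]))
  | some i =>
    rintro x ⟨hxi, hxa⟩
    rw [mem_ball] at hxi
    refine ⟨mem_ball.2 (by linarith [dist_triangle x (a i) c, h.dist_center_add_le i, h.pos]), ?_⟩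
    rintro ⟨j, rfl⟩
    have hji : j ≠ i := fun hji ↦ hxa (hji ▸ rfl)
    linarith [h.le_dist hji, h.pos]

end IsSeparatingRadius

theorem eventually_isSeparatingRadius [Finite ι] (hr : 0 < r) (ha : Injective a)
    (haD : ∀ i, a i ∈ ball c r) : ∀ᶠ ε in 𝓝[>] 0, IsSeparatingRadius c r a ε := by
  have hsmall {d : ℝ} (hd : 0 < d) : ∀ᶠ ε in 𝓝[>] (0 : ℝ), 2 * ε ≤ d := by
    filter_upwards [Ioo_mem_nhdsGT (half_pos hd)] with ε hε
    linarith [hε.2]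
  have hcenter : ∀ᶠ ε in 𝓝[>] 0, ∀ i, dist (a i) c + 2 * ε ≤ r :=
    eventually_all.2 fun i ↦ (hsmall (sub_pos.2 (mem_ball.1 (haD i)))).mono fun _ h ↦ by linarith
  have hpair : ∀ᶠ ε in 𝓝[>] 0, Pairwise fun i j ↦ 2 * ε ≤ dist (a i) (a j) :=
    eventually_all.2 fun i ↦ eventually_all.2 fun j ↦
      eventually_imp_distrib_left.2 fun hij ↦ hsmall (dist_pos.2 (ha.ne hij))
  filter_upwards [self_mem_nhdsWithin, Ioo_mem_nhdsGT hr, hcenter, hpair] with ε hε hεr hc hp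
    using ⟨hε, hεr.2, hc, hp⟩

theorem eventually_disjoint_endPiece [ProperSpace E] [Finite ι] {K : Set E} (hK : IsCompact K)
    (hKX : K ⊆ ball c r \ range a) : ∀ᶠ ε in 𝓝[>] 0, ∀ i, Disjoint K (endPiece c r a ε i) := by
  obtain ⟨r', hr'r, hKr'⟩ := exists_lt_subset_ball hK.isClosed (hKX.trans sdiff_subset)
  rw [eventually_all]
  rintro (_ | i)
  · filter_upwards [Ioo_mem_nhdsGT (sub_pos.2 hr'r)] with ε hε
    refine disjoint_left.2 fun x hxK hx ↦ hx.2 (mem_closedBall.2 ?_)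
    linarith [mem_ball.1 (hKr' hxK), hε.2]
  · obtain ⟨δ, hδ, hδK⟩ := eventually_nhds_iff_ball.1
      (hK.isClosed.isOpen_compl.mem_nhds fun h ↦ (hKX h).2 ⟨i, rfl⟩)
    filter_upwards [Ioo_mem_nhdsGT hδ] with ε hε
    exact disjoint_right.2 fun x hx ↦ hδK x (ball_subset_ball hε.2.le hx.1)

end PuncturedBall

theorem IsSeparatingRadius.isConnected_endPiece {E ι : Type*} [NormedAddCommGroup E]
    [NormedSpace ℝ E] (hE : 1 < Module.rank ℝ E) {c : E} {r ε : ℝ} {a : ι → E}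
    (h : IsSeparatingRadius c r a ε) (i : Option ι) : IsConnected (endPiece c r a ε i) := by
  cases i with
  | none =>
    exact isConnected_ball_diff_closedBall hE c (by linarith [h.lt_radius]) (by linarith [h.pos])
  | some i =>
    rw [endPiece, ← closedBall_zero]
    exact isConnected_ball_diff_closedBall hE (a i) le_rfl h.pos

theorem mDisconnectedNearInfinity_ball_diff_range {E ι : Type*} [NormedAddCommGroup E]
    [NormedSpace ℝ E] [ProperSpace E] [Finite ι] (hE : 1 < Module.rank ℝ E) {c : E} {r : ℝ}
    {a : ι → E} (hr : 0 < r) (ha : Injective a) (haD : ∀ i, a i ∈ ball c r) :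
    MDisconnectedNearInfinity ↥(ball c r \ range a) (Nat.card ι) := by
  have hsep := eventually_isSeparatingRadius hr ha haD
  refine mDisconnectedNearInfinity_of_nested_partitions (l := 𝓝[>] 0)
    (V := fun ε i ↦ (↑) ⁻¹' endPiece c r a ε i) Finite.card_option ?_ ?_ ?_ ?_ ?_ ?_
  · exact .of_forall fun ε i ↦ (isOpen_endPiece ε i).preimage continuous_subtype_val
  · filter_upwards [hsep] with ε hε i j hij using (hε.pairwise_disjoint_endPiece hij).preimage _
  · filter_upwards [hsep] with ε hε i
      using isConnected_preimage_val (hε.endPiece_subset i) (hε.isConnected_endPiece hE i)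
  · filter_upwards [self_mem_nhdsWithin] with ε hε
    rw [← preimage_iUnion, ← preimage_compl, Subtype.isCompact_iff, Subtype.image_preimage_coe]
    exact isCompact_diff_iUnion_endPiece hε
  · filter_upwards [self_mem_nhdsWithin] with ε hε
    filter_upwards [Ioo_mem_nhdsGT hε] with ε' hε' i using preimage_mono (endPiece_mono hε'.2.le i)
  · intro K hK
    filter_upwards [eventually_disjoint_endPiece (hK.image continuous_subtype_val)
      (image_subset_iff.2 fun x _ ↦ x.2)] with ε hε
    exact disjoint_iUnion_right.2 fun i ↦ ((hε i).preimage _).mono_left (subset_preimage_image _ _)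

/-- The open unit ball of ℝⁿ (n ≥ 2) with p distinct points removed is
p-disconnected near infinity. -/
theorem stmt_14 (n : ℕ) (hn : 2 ≤ n) (p : ℕ) (a : Fin p → EuclideanSpace ℝ (Fin n))
    (ha : Function.Injective a) (haD : ∀ i, a i ∈ Metric.ball (0 : EuclideanSpace ℝ (Fin n)) 1) :
    MDisconnectedNearInfinity
      ((Metric.ball (0 : EuclideanSpace ℝ (Fin n)) 1 \ Set.range a : Set (EuclideanSpace ℝ (Fin n)))) p := by
  have hE : 1 < Module.rank ℝ (EuclideanSpace ℝ (Fin n)) := by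
    rw [← Module.finrank_eq_rank, finrank_euclideanSpace_fin]
    exact_mod_cast hn
  simpa using mDisconnectedNearInfinity_ball_diff_range hE one_pos ha haD
end

section
/- Let D̄ be the closed unit ball in ℝⁿ, n ≥ 2, and let a₁,…,a_p be p distinct points of the open ball D, p ≥ 1. Then Y(p) = D̄ \ {a₁,…,a_p} is (p−1)-disconnected near infinity. -/
/-!
Around each puncture `aᵢ` the space `K \ {a₁, …, a_p}` looks like a punctured ball, which is
connected in dimension at least two. A set with compact complement contains all points close
enough to the punctures, so it contains a union of `p` small disjoint punctured balls: a set
with compact complement and exactly `p` components. Conversely, inside the union of `p` fixed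
disjoint punctured balls, every set with compact complement meets each of the balls, and the
balls separate it into at least `p` pieces.
-/

open Set Metric Topology Filter Function

theorem MDisconnectedNearInfinity.of_exists_lower_bound {X : Type*} [TopologicalSpace X] {m : ℕ}
    (hex : ∀ P : Set X, IsCompact Pᶜ →
      ∃ Q ⊆ P, IsCompact Qᶜ ∧ Nat.card (ConnectedComponents Q) = m + 1)
    (hmin : ∃ P : Set X, IsCompact Pᶜ ∧ ∀ Q ⊆ P, IsCompact Qᶜ →
      Finite (ConnectedComponents Q) → m + 1 ≤ Nat.card (ConnectedComponents Q)) :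
    MDisconnectedNearInfinity X m := by
  refine ⟨hex, fun k hk hk' => ?_⟩
  obtain ⟨P, hP, hle⟩ := hmin
  obtain ⟨Q, hQP, hQ, hcard⟩ := hk' P hP
  have := hle Q hQP hQ (Nat.finite_of_card_ne_zero (by omega))
  omega

section Partition

variable {Y Z ι : Type*} [TopologicalSpace Y] [TopologicalSpace Z] {f : Y → Z} {U : ι → Set Z}

theorem isClopen_preimage_of_pairwise_disjoint (hf : Continuous f) (hU : ∀ i, IsOpen (U i))
    (hdisj : Pairwise (Disjoint on U)) (hcover : range f ⊆ ⋃ i, U i) (i : ι) :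
    IsClopen (f ⁻¹' U i) := by
  refine ⟨isOpen_compl_iff.1 <| isOpen_iff_forall_mem_open.2 fun y hy => ?_, (hU i).preimage hf⟩
  obtain ⟨j, hj⟩ := mem_iUnion.1 (hcover (mem_range_self y))
  have hji : j ≠ i := by rintro rfl; exact hy hj
  exact ⟨f ⁻¹' U j, fun z hz hzi => (hdisj hji).ne_of_mem hz hzi rfl, (hU j).preimage hf, hj⟩

theorem injective_connectedComponentsMk_of_mem_preimage (hf : Continuous f)
    (hU : ∀ i, IsOpen (U i)) (hdisj : Pairwise (Disjoint on U)) (hcover : range f ⊆ ⋃ i, U i)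
    {c : ι → Y} (hc : ∀ i, f (c i) ∈ U i) :
    Injective fun i => (c i : ConnectedComponents Y) := by
  intro i j hij
  by_contra hne
  have hci : c i ∈ f ⁻¹' U j :=
    (isClopen_preimage_of_pairwise_disjoint hf hU hdisj hcover j).connectedComponent_subset
      (hc j) (ConnectedComponents.coe_eq_coe'.1 hij)
  exact (hdisj hne).ne_of_mem (hc i) hci rfl

theorem card_le_card_connectedComponents_of_pairwise_disjoint
    [Finite (ConnectedComponents Y)] (hf : Continuous f) (hU : ∀ i, IsOpen (U i))
    (hdisj : Pairwise (Disjoint on U)) (hcover : range f ⊆ ⋃ i, U i)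
    (hne : ∀ i, (f ⁻¹' U i).Nonempty) :
    Nat.card ι ≤ Nat.card (ConnectedComponents Y) := by
  choose c hc using hne
  exact Nat.card_le_card_of_injective _
    (injective_connectedComponentsMk_of_mem_preimage hf hU hdisj hcover hc)

theorem card_connectedComponents_eq_of_pairwise_disjoint (hf : Continuous f)
    (hU : ∀ i, IsOpen (U i)) (hdisj : Pairwise (Disjoint on U)) (hcover : range f ⊆ ⋃ i, U i)
    (hne : ∀ i, (f ⁻¹' U i).Nonempty) (hconn : ∀ i, IsPreconnected (f ⁻¹' U i)) :
    Nat.card (ConnectedComponents Y) = Nat.card ι := by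
  choose c hc using hne
  refine (Nat.card_eq_of_bijective _
    ⟨injective_connectedComponentsMk_of_mem_preimage hf hU hdisj hcover hc, fun z => ?_⟩).symm
  obtain ⟨y, rfl⟩ := ConnectedComponents.surjective_coe z
  obtain ⟨i, hi⟩ := mem_iUnion.1 (hcover (mem_range_self y))
  exact ⟨i, ConnectedComponents.coe_eq_coe'.2 ((hconn i).subset_connectedComponent hi (hc i))⟩

end Partition

theorem isCompact_compl_preimage_val {X : Type*} [TopologicalSpace X] {K s U : Set X}
    (hK : IsCompact K) (hU : IsOpen U) (hsU : s ⊆ U) :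
    IsCompact (((↑) : ↥(K \ s) → X) ⁻¹' U)ᶜ := by
  rw [Subtype.isCompact_iff, image_compl_preimage, Subtype.range_coe, sdiff_sdiff,
    union_eq_right.2 hsU]
  exact hK.diff hU

theorem eventually_preimage_ball_subset {X : Type*} [MetricSpace X] {s : Set X} {P : Set s}
    (hP : IsCompact Pᶜ) {x : X} (hx : x ∉ s) :
    ∀ᶠ δ in 𝓝[>] 0, ((↑) : s → X) ⁻¹' ball x δ ⊆ P := by
  have hclosed : IsClosed (((↑) : s → X) '' Pᶜ) := (hP.image continuous_subtype_val).isClosed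
  have hxP : x ∉ ((↑) : s → X) '' Pᶜ := fun ⟨y, _, hy⟩ => hx (hy ▸ y.2)
  obtain ⟨δ, hδ, hball⟩ := Metric.isOpen_iff.1 hclosed.isOpen_compl x hxP
  filter_upwards [Ioo_mem_nhdsGT hδ] with ε hε y hy
  by_contra hyP
  exact hball (ball_subset_ball hε.2.le hy) ⟨y, hyP, rfl⟩

theorem isPathConnected_ball_diff_singleton {E : Type*} [NormedAddCommGroup E] [NormedSpace ℝ E]
    (hE : 1 < Module.rank ℝ E) (c : E) {r : ℝ} (hr : 0 < r) :
    IsPathConnected (ball c r \ {c}) := by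
  set f := OpenPartialHomeomorph.univBall c r
  have hinj : Injective f := injOn_univ.1 (OpenPartialHomeomorph.univBall_source c r ▸ f.injOn)
  have himage : f '' {0}ᶜ = ball c r \ {c} := by
    rw [image_compl_eq_range_sdiff_image hinj, image_singleton,
      OpenPartialHomeomorph.univBall_apply_zero, ← image_univ,
      ← OpenPartialHomeomorph.univBall_source c r, f.image_source_eq_target,
      OpenPartialHomeomorph.univBall_target c hr]
  exact himage ▸ (isPathConnected_compl_singleton_of_one_lt_rank hE 0).image
    (OpenPartialHomeomorph.continuous_univBall c r)

section Punctures

variable {E ι : Type*}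

def IsIsolatingRadius [PseudoMetricSpace E] (K : Set E) (a : ι → E) (ε : ℝ) : Prop :=
  0 < ε ∧ (∀ i, ball (a i) ε ⊆ K) ∧ Pairwise (Disjoint on fun i => ball (a i) ε)

def punctureNbhd [PseudoMetricSpace E] (K : Set E) (a : ι → E) (ε : ℝ) : Set ↥(K \ range a) :=
  (↑) ⁻¹' ⋃ i, ball (a i) ε

theorem eventually_isIsolatingRadius [MetricSpace E] [Finite ι] {K : Set E} {a : ι → E}
    (ha : Injective a) (haK : ∀ i, a i ∈ interior K) :
    ∀ᶠ ε in 𝓝[>] 0, IsIsolatingRadius K a ε := by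
  refine (eventually_mem_nhdsWithin (a := 0) (s := Ioi 0)).and ((eventually_all.2 fun i => ?_).and
    (eventually_all.2 fun i => eventually_all.2 fun j => ?_))
  · obtain ⟨δ, hδ, hball⟩ := Metric.mem_nhds_iff.1 (mem_interior_iff_mem_nhds.1 (haK i))
    filter_upwards [Ioo_mem_nhdsGT hδ] with ε hε using (ball_subset_ball hε.2.le).trans hball
  · by_cases hij : i = j
    · exact .of_forall fun _ hne => absurd hij hne
    have hdist : 0 < dist (a i) (a j) / 2 := half_pos (dist_pos.2 (ha.ne hij))
    filter_upwards [Ioo_mem_nhdsGT hdist] with ε hε _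
    exact ball_disjoint_ball (by linarith [hε.2])

theorem IsIsolatingRadius.ball_diff_singleton_subset [PseudoMetricSpace E] {K : Set E}
    {a : ι → E} {ε : ℝ} (hε : IsIsolatingRadius K a ε) (i : ι) :
    ball (a i) ε \ {a i} ⊆ K \ range a := by
  rintro x ⟨hx, hxi⟩
  refine ⟨hε.2.1 i hx, ?_⟩
  rintro ⟨j, rfl⟩
  obtain rfl | hji := eq_or_ne j i
  · exact hxi rfl
  · exact (hε.2.2 hji).ne_of_mem (mem_ball_self hε.1) hx rfl

end Punctures

section NormedSpace

variable {E ι : Type*} [NormedAddCommGroup E] [NormedSpace ℝ E] {K : Set E} {a : ι → E}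

theorem card_connectedComponents_punctureNbhd (hE : 1 < Module.rank ℝ E) {ε : ℝ}
    (hε : IsIsolatingRadius K a ε) :
    Nat.card (ConnectedComponents (punctureNbhd K a ε)) = Nat.card ι := by
  let g : punctureNbhd K a ε → E := fun q => q.1.1
  have hg : IsInducing g := IsInducing.subtypeVal.comp IsInducing.subtypeVal
  have himage : ∀ i, g '' (g ⁻¹' ball (a i) ε) = ball (a i) ε \ {a i} := by
    refine fun i => Subset.antisymm ?_ fun x hx => ?_
    · rintro _ ⟨q, hq, rfl⟩
      exact ⟨hq, fun h => q.1.2.2 ⟨i, h.symm⟩⟩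
    · exact ⟨⟨⟨x, hε.ball_diff_singleton_subset i hx⟩, mem_iUnion.2 ⟨i, hx.1⟩⟩, hx.1, rfl⟩
  have hconn : ∀ i, IsPathConnected (g '' (g ⁻¹' ball (a i) ε)) := fun i =>
    himage i ▸ isPathConnected_ball_diff_singleton hE (a i) hε.1
  exact card_connectedComponents_eq_of_pairwise_disjoint hg.continuous (fun _ => isOpen_ball)
    hε.2.2 (fun _ ⟨q, hq⟩ => hq ▸ q.2) (fun i => (hconn i).nonempty.of_image)
    (fun i => hg.isPreconnected_image.1 (hconn i).isConnected.isPreconnected)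

theorem card_le_card_connectedComponents_of_subset_punctureNbhd (hE : 1 < Module.rank ℝ E)
    {ε : ℝ} (hε : IsIsolatingRadius K a ε) {Q : Set ↥(K \ range a)}
    (hQ : Q ⊆ punctureNbhd K a ε) (hQc : IsCompact Qᶜ) [Finite (ConnectedComponents Q)] :
    Nat.card ι ≤ Nat.card (ConnectedComponents Q) := by
  let g : Q → E := fun q => q.1.1
  refine card_le_card_connectedComponents_of_pairwise_disjoint (U := fun i => ball (a i) ε)
    (by fun_prop) (fun _ => isOpen_ball) hε.2.2 (fun _ ⟨q, hq⟩ => hq ▸ hQ q.2) fun i => ?_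
  have hai : a i ∉ K \ range a := fun h => h.2 ⟨i, rfl⟩
  obtain ⟨δ, hδQ, hδ, hδε⟩ :=
    ((eventually_preimage_ball_subset hQc hai).and (Ioc_mem_nhdsGT hε.1)).exists
  obtain ⟨x, hx⟩ := (isPathConnected_ball_diff_singleton hE (a i) hδ).nonempty
  have hxX : x ∈ K \ range a :=
    hε.ball_diff_singleton_subset i (sdiff_subset_sdiff_left (ball_subset_ball hδε) hx)
  exact ⟨⟨⟨x, hxX⟩, hδQ hx.1⟩, ball_subset_ball hδε hx.1⟩

theorem mDisconnectedNearInfinity_diff_range [Finite ι] [Nonempty ι]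
    (hE : 1 < Module.rank ℝ E) (hK : IsCompact K) (ha : Injective a)
    (haK : ∀ i, a i ∈ interior K) :
    MDisconnectedNearInfinity ↥(K \ range a) (Nat.card ι - 1) := by
  have hcard : Nat.card ι - 1 + 1 = Nat.card ι := Nat.sub_add_cancel Nat.card_pos
  have hcompact : ∀ {ε}, IsIsolatingRadius K a ε → IsCompact (punctureNbhd K a ε)ᶜ :=
    fun hε => isCompact_compl_preimage_val hK (isOpen_iUnion fun _ => isOpen_ball)
      fun _ ⟨i, hi⟩ => mem_iUnion.2 ⟨i, hi ▸ mem_ball_self hε.1⟩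
  have hai : ∀ i, a i ∉ K \ range a := fun i h => h.2 ⟨i, rfl⟩
  refine .of_exists_lower_bound (fun P hP => ?_) ?_
  · obtain ⟨ε, hε, hεP⟩ := ((eventually_isIsolatingRadius ha haK).and
      (eventually_all.2 fun i => eventually_preimage_ball_subset hP (hai i))).exists
    refine ⟨punctureNbhd K a ε, ?_, hcompact hε, ?_⟩
    · simpa only [punctureNbhd, preimage_iUnion, iUnion_subset_iff] using hεP
    · rw [hcard, card_connectedComponents_punctureNbhd hE hε]
  · obtain ⟨ε, hε⟩ := (eventually_isIsolatingRadius ha haK).exists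
    refine ⟨punctureNbhd K a ε, hcompact hε, fun Q hQ hQc _ => ?_⟩
    rw [hcard]
    exact card_le_card_connectedComponents_of_subset_punctureNbhd hE hε hQ hQc

end NormedSpace

/-- The closed unit ball of ℝⁿ (n ≥ 2) with p ≥ 1 distinct points of the open
ball removed is (p-1)-disconnected near infinity. -/
theorem stmt_15 (n : ℕ) (hn : 2 ≤ n) (p : ℕ) (hp : 1 ≤ p)
    (a : Fin p → EuclideanSpace ℝ (Fin n)) (ha : Function.Injective a)
    (haD : ∀ i, a i ∈ Metric.ball (0 : EuclideanSpace ℝ (Fin n)) 1) :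
    MDisconnectedNearInfinity
      ((Metric.closedBall (0 : EuclideanSpace ℝ (Fin n)) 1 \ Set.range a : Set (EuclideanSpace ℝ (Fin n)))) (p - 1) := by
  have hE : 1 < Module.rank ℝ (EuclideanSpace ℝ (Fin n)) := by
    rw [← Module.finrank_eq_rank, finrank_euclideanSpace_fin]
    exact_mod_cast hn
  have : Nonempty (Fin p) := ⟨⟨0, hp⟩⟩
  simpa only [Nat.card_fin] using
    mDisconnectedNearInfinity_diff_range hE (isCompact_closedBall 0 1) ha
    fun i => ball_subset_interior_closedBall (haD i)
end

section
/- For n ≥ 2 and distinct points a₁,…,a_p in the open unit ball D of ℝⁿ and distinct points b₁,…,b_q in D with p ≠ q, the spaces D \ {a₁,…,a_p} and D \ {b₁,…,b_q} are not homeomorphic. -/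
/-!
Both spaces are distinguished by their number of ends. Outside a large compact set, the ball
with `p` points removed falls apart into the shell near the boundary sphere and `p` punctured
balls around the removed points: these `p + 1` regions are connected (as `n ≥ 2`) and none of them
is relatively compact, so there are at least `p + 1` ends. Conversely, every relatively clopen
piece of the complement of a compact set that is not relatively compact accumulates at the sphere
or at a removed point, hence meets, and by connectedness contains, one of these regions, so there
are at most `p + 1` ends.
-/

open Set Metric Function Topology

/-- `X` has at least `k` ends. -/
def EndsGe (X : Type*) [TopologicalSpace X] (k : ℕ) : Prop :=
  ∃ K : Set X, IsCompact K ∧ ∃ U : Fin k → Set X, Pairwise (Disjoint on U) ∧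
    ∀ i, U i ⊆ Kᶜ ∧ IsOpen (U i) ∧ IsOpen (Kᶜ \ U i) ∧ ¬IsCompact (closure (U i))

section Ends

variable {X : Type*} [TopologicalSpace X]

theorem EndsGe.of_homeomorph {Y : Type*} [TopologicalSpace Y] (h : X ≃ₜ Y) {k : ℕ}
    (hX : EndsGe X k) : EndsGe Y k := by
  obtain ⟨K, hK, U, hdisj, hU⟩ := hX
  refine ⟨h.symm ⁻¹' K, h.symm.isCompact_preimage.2 hK, fun i => h.symm ⁻¹' U i,
    fun i j hij => (hdisj hij).preimage _, fun i => ?_⟩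
  obtain ⟨hUK, hopen, hopen', hcpt⟩ := hU i
  refine ⟨preimage_mono hUK, hopen.preimage h.symm.continuous,
    hopen'.preimage h.symm.continuous, ?_⟩
  rwa [← h.symm.preimage_closure, h.symm.isCompact_preimage]

theorem endsGe_card_of_pairwise_disjoint {ι : Type*} [Fintype ι] (U : ι → Set X)
    (hdisj : Pairwise (Disjoint on U)) (hopen : ∀ i, IsOpen (U i))
    (hK : IsCompact (⋃ i, U i)ᶜ) (hU : ∀ i, ¬IsCompact (closure (U i))) :
    EndsGe X (Fintype.card ι) := by
  have hdiff : ∀ i, (⋃ j, U j) \ U i = ⋃ (j) (_ : j ≠ i), U j := fun i => by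
    ext x
    simp only [mem_sdiff, mem_iUnion, exists_prop]
    constructor
    · rintro ⟨⟨j, hj⟩, hi⟩
      exact ⟨j, fun h => hi (h ▸ hj), hj⟩
    · rintro ⟨j, hji, hj⟩
      exact ⟨⟨j, hj⟩, disjoint_left.1 (hdisj hji) hj⟩
  set e := (Fintype.equivFin ι).symm
  refine ⟨_, hK, U ∘ e, fun i j hij => hdisj (e.injective.ne hij), fun i => ⟨?_, hopen _, ?_, hU _⟩⟩
  · rw [compl_compl]
    exact subset_iUnion U (e i)
  · rw [compl_compl, comp_apply, hdiff]
    exact isOpen_biUnion fun j _ => hopen j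

theorem EndsGe.le_card {k : ℕ} (h : EndsGe X k) {ι : Type*} [Fintype ι]
    (hW : ∀ K : Set X, IsCompact K → ∃ W : ι → Set X, (∀ j, W j ⊆ Kᶜ ∧ IsPreconnected (W j)) ∧
      ∀ U : Set X, ¬IsCompact (closure U) → ∃ j, (U ∩ W j).Nonempty) :
    k ≤ Fintype.card ι := by
  obtain ⟨K, hK, U, hdisj, hU⟩ := h
  obtain ⟨W, hWK, hmeet⟩ := hW K hK
  choose j hj using fun i => hmeet (U i) (hU i).2.2.2
  have hWU : ∀ i, W (j i) ⊆ U i := fun i =>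
    (hWK (j i)).2.subset_left_of_subset_union (hU i).2.1 (hU i).2.2.1 disjoint_sdiff_self_right
      ((hWK (j i)).1.trans le_sup_sdiff) (inter_comm _ _ ▸ hj i)
  have hj_inj : Injective j := fun i i' hii' => by
    by_contra hne
    obtain ⟨x, hxU, hxW⟩ := hj i
    exact disjoint_left.1 (hdisj hne) hxU (hWU i' (hii' ▸ hxW))
  simpa using Fintype.card_le_of_injective j hj_inj

end Ends

theorem isCompact_closure_iff_closure_image_subset {E : Type*} [MetricSpace E] [ProperSpace E]
    {X : Set E} (hX : Bornology.IsBounded X) (U : Set X) :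
    IsCompact (closure U) ↔ closure ((↑) '' U) ⊆ X := by
  rw [IsInducing.subtypeVal.closure_eq_preimage_closure_image, Subtype.isCompact_iff,
    Subtype.image_preimage_coe]
  constructor
  · intro h
    exact (closure_minimal (subset_inter (Subtype.coe_image_subset X U) subset_closure)
      h.isClosed).trans inter_subset_left
  · intro h
    rw [inter_eq_right.2 h]
    exact (hX.subset (Subtype.coe_image_subset X U)).isCompact_closure

theorem exists_pos_forall_ball_subset_pairwise_disjoint {α ι : Type*} [MetricSpace α] [Finite ι]
    {a : ι → α} (ha : Injective a) {U : Set α} (hU : IsOpen U) (haU : ∀ i, a i ∈ U) :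
    ∃ ε > 0, (∀ i, ball (a i) ε ⊆ U) ∧ Pairwise (Disjoint on fun i => ball (a i) ε) := by
  have hsub : ∀ i, ∀ᶠ ε in 𝓝 (0 : ℝ), ball (a i) ε ⊆ U := fun i => by
    obtain ⟨δ, hδ, hδU⟩ := Metric.isOpen_iff.1 hU _ (haU i)
    filter_upwards [eventually_lt_nhds hδ] with ε hε using (ball_subset_ball hε.le).trans hδU
  have hsep : ∀ i j, ∀ᶠ ε in 𝓝 (0 : ℝ), i ≠ j → ε + ε ≤ dist (a i) (a j) := fun i j => by
    rcases eq_or_ne i j with rfl | hij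
    · exact Filter.Eventually.of_forall fun _ h => (h rfl).elim
    · filter_upwards [eventually_lt_nhds (half_pos (dist_pos.2 (ha.ne hij)))] with ε hε _
      linarith
  have hsmall := (Filter.eventually_all.2 hsub).and
    (Filter.eventually_all.2 fun i => Filter.eventually_all.2 (hsep i))
  obtain ⟨ε, ⟨hεU, hεsep⟩, hε⟩ := ((hsmall.filter_mono nhdsWithin_le_nhds).and
    (self_mem_nhdsWithin : ∀ᶠ ε in 𝓝[>] (0 : ℝ), 0 < ε)).exists
  exact ⟨ε, hε, hεU, fun i j hij => ball_disjoint_ball (hεsep i j hij)⟩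

section Annulus

variable {E : Type*} [NormedAddCommGroup E] [NormedSpace ℝ E]

theorem add_smul_mem_ball_diff_closedBall {v : E} (hv : ‖v‖ = 1) (c : E) {s t u : ℝ}
    (hs : 0 ≤ s) (hu : u ∈ Ioo s t) : c + u • v ∈ ball c t \ closedBall c s := by
  have hdist : dist (c + u • v) c = u := by
    rw [dist_eq_norm, add_sub_cancel_left, norm_smul, hv, mul_one,
      Real.norm_of_nonneg (hs.trans hu.1.le)]
  simp only [mem_sdiff, mem_ball, mem_closedBall, hdist, not_le]
  exact ⟨hu.2, hu.1⟩

theorem add_smul_mem_closure_ball_diff_closedBall {v : E} (hv : ‖v‖ = 1) (c : E) {s t u : ℝ}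
    (hs : 0 ≤ s) (hst : s < t) (hu : u ∈ Icc s t) :
    c + u • v ∈ closure (ball c t \ closedBall c s) := by
  rw [← closure_Ioo hst.ne] at hu
  exact map_mem_closure (f := fun u : ℝ => c + u • v) (by fun_prop) hu
    fun u hu => add_smul_mem_ball_diff_closedBall hv c hs hu

theorem isPreconnected_ball_diff_closedBall (hE : 1 < Module.rank ℝ E) (c : E) {s t : ℝ}
    (hs : 0 ≤ s) : IsPreconnected (ball c t \ closedBall c s) := by
  have hpolar : ball c t \ closedBall c s =
      (fun p : ℝ × E => c + p.1 • p.2) '' (Ioo s t ×ˢ sphere 0 1) := by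
    refine Subset.antisymm (fun x ⟨hxt, hxs⟩ => ?_) ?_
    · rw [mem_ball, dist_eq_norm] at hxt
      rw [mem_closedBall, dist_eq_norm, not_le] at hxs
      have hx : x - c ≠ 0 := norm_pos_iff.1 (hs.trans_lt hxs)
      refine ⟨(‖x - c‖, ‖x - c‖⁻¹ • (x - c)), ⟨⟨hxs, hxt⟩, ?_⟩, ?_⟩
      · rw [mem_sphere_zero_iff_norm]
        exact norm_smul_inv_norm hx
      · simp [smul_inv_smul₀ (norm_ne_zero_iff.2 hx)]
    · rintro _ ⟨⟨u, v⟩, ⟨hu, hv⟩, rfl⟩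
      exact add_smul_mem_ball_diff_closedBall (mem_sphere_zero_iff_norm.1 hv) c hs hu
  rw [hpolar]
  exact (isPreconnected_Ioo.prod (isPreconnected_sphere hE 0 1)).image _ (by fun_prop)

end Annulus

section EndNbhd

variable {E : Type*} [NormedAddCommGroup E] {ι : Type*}

/-- Neighbourhoods of the ends of `ball 0 1 \ range a`: the shell near the sphere and a punctured
ball around each `a i`. -/
def endNbhd (a : ι → E) (r ε : ℝ) : Option ι → Set E
  | none => ball 0 1 \ closedBall 0 r
  | some i => ball (a i) ε \ {a i}

variable {a : ι → E} {r ε : ℝ}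

theorem exists_radii_endNbhd [ProperSpace E] [Finite ι] (ha : Injective a)
    (haD : ∀ i, a i ∈ ball (0 : E) 1) {C : Set E} (hC : IsCompact C)
    (hCX : C ⊆ ball 0 1 \ range a) :
    ∃ r ε : ℝ, 0 < r ∧ r < 1 ∧ 0 < ε ∧ C ⊆ closedBall 0 r ∧ (∀ i, ball (a i) ε ⊆ ball 0 r) ∧
      (∀ i, Disjoint (ball (a i) ε) C) ∧ Pairwise (Disjoint on fun i => ball (a i) ε) := by
  obtain ⟨r, ⟨hr0, hr1⟩, hr⟩ := exists_pos_lt_subset_ball one_pos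
    (hC.isClosed.union (finite_range a).isClosed)
    (union_subset (hCX.trans sdiff_subset) (range_subset_iff.2 haD))
  have haU : ∀ i, a i ∈ ball 0 r \ C := fun i =>
    ⟨hr (Or.inr ⟨i, rfl⟩), fun h => (hCX h).2 ⟨i, rfl⟩⟩
  obtain ⟨ε, hε, hsub, hdisj⟩ :=
    exists_pos_forall_ball_subset_pairwise_disjoint ha (isOpen_ball.sdiff hC.isClosed) haU
  exact ⟨r, ε, hr0, hr1, hε, fun x hx => ball_subset_closedBall (hr (Or.inl hx)),
    fun i => (hsub i).trans sdiff_subset, fun i => disjoint_left.2 fun x hx => (hsub i hx).2, hdisj⟩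

theorem isOpen_endNbhd : ∀ j, IsOpen (endNbhd a r ε j)
  | none => isOpen_ball.sdiff isClosed_closedBall
  | some _ => isOpen_ball.sdiff isClosed_singleton

theorem isPreconnected_endNbhd [NormedSpace ℝ E] (hE : 1 < Module.rank ℝ E) (hr : 0 ≤ r) :
    ∀ j, IsPreconnected (endNbhd a r ε j)
  | none => isPreconnected_ball_diff_closedBall hE 0 hr
  | some i => by
    simpa only [endNbhd, closedBall_zero] using
      isPreconnected_ball_diff_closedBall hE (a i) (t := ε) le_rfl

theorem endNbhd_subset (hr1 : r < 1) (hε : 0 < ε) (hball : ∀ i, ball (a i) ε ⊆ ball 0 r)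
    (hdisj : Pairwise (Disjoint on fun i => ball (a i) ε)) :
    ∀ j, endNbhd a r ε j ⊆ ball 0 1 \ range a
  | none => by
    rintro x ⟨hx1, hxr⟩
    refine ⟨hx1, ?_⟩
    rintro ⟨i, rfl⟩
    exact hxr (ball_subset_closedBall (hball i (mem_ball_self hε)))
  | some i => by
    rintro x ⟨hxi, hx⟩
    refine ⟨ball_subset_ball hr1.le (hball i hxi), ?_⟩
    rintro ⟨j, rfl⟩
    have hji : j ≠ i := fun h => hx (h ▸ rfl)
    exact disjoint_left.1 (hdisj hji) (mem_ball_self hε) hxi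

theorem disjoint_endNbhd {C : Set E} (hC : C ⊆ closedBall 0 r)
    (hCa : ∀ i, Disjoint (ball (a i) ε) C) : ∀ j, Disjoint (endNbhd a r ε j) C
  | none => disjoint_left.2 fun _ hx hxC => hx.2 (hC hxC)
  | some i => (hCa i).mono_left sdiff_subset

theorem pairwise_disjoint_endNbhd (hball : ∀ i, ball (a i) ε ⊆ ball 0 r)
    (hdisj : Pairwise (Disjoint on fun i => ball (a i) ε)) : Pairwise (Disjoint on endNbhd a r ε)
  | none, none, h => (h rfl).elim
  | none, some i, _ =>
    disjoint_left.2 fun _ hx hxi => hx.2 (ball_subset_closedBall (hball i hxi.1))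
  | some i, none, _ =>
    disjoint_left.2 fun _ hxi hx => hx.2 (ball_subset_closedBall (hball i hxi.1))
  | some _, some _, h => (hdisj fun hij => h (congrArg some hij)).mono sdiff_subset sdiff_subset

theorem diff_iUnion_endNbhd (hr1 : r < 1) (hε : 0 < ε) :
    (ball 0 1 \ range a) \ ⋃ j, endNbhd a r ε j = closedBall 0 r \ ⋃ i, ball (a i) ε := by
  ext x
  simp only [Set.mem_sdiff, mem_iUnion, Option.exists, endNbhd, mem_ball, mem_closedBall,
    mem_range, mem_singleton_iff, not_exists, not_and, not_not, not_or, not_lt]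
  constructor
  · rintro ⟨⟨hx1, hxa⟩, hxr, hxε⟩
    exact ⟨hxr hx1, fun i => not_lt.1 fun h => hxa i (hxε i h).symm⟩
  · rintro ⟨hxr, hxε⟩
    refine ⟨⟨hxr.trans_lt hr1, fun i h => ?_⟩, fun _ => hxr, fun i h => ((hxε i).not_gt h).elim⟩
    exact (hxε i).not_gt (by rw [h, dist_self]; exact hε)

theorem not_closure_endNbhd_subset [NormedSpace ℝ E] [Nontrivial E] (hr0 : 0 ≤ r) (hr1 : r < 1)
    (hε : 0 < ε) :
    ∀ j, ¬closure (endNbhd a r ε j) ⊆ ball 0 1 \ range a := by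
  obtain ⟨v, hv⟩ := exists_norm_eq E zero_le_one
  rintro (_ | i) hsub
  · have := hsub (add_smul_mem_closure_ball_diff_closedBall hv 0 hr0 hr1 ⟨hr1.le, le_rfl⟩)
    simp [hv] at this
  · have := add_smul_mem_closure_ball_diff_closedBall hv (a i) le_rfl hε ⟨le_rfl, hε.le⟩
    rw [zero_smul, add_zero, closedBall_zero] at this
    exact (hsub this).2 ⟨i, rfl⟩

theorem exists_inter_endNbhd_nonempty (hr1 : r < 1) (hε : 0 < ε) {T : Set E}
    (hT : T ⊆ ball 0 1 \ range a) (hcl : ¬closure T ⊆ ball 0 1 \ range a) :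
    ∃ j, (T ∩ endNbhd a r ε j).Nonempty := by
  obtain ⟨z, hzT, hzX⟩ := not_subset.1 hcl
  by_cases hz : z ∈ range a
  · obtain ⟨i, rfl⟩ := hz
    obtain ⟨y, hyT, hy⟩ := Metric.mem_closure_iff.1 hzT ε hε
    exact ⟨some i, y, hyT, by rwa [mem_ball, dist_comm], fun h => (hT hyT).2 ⟨i, h.symm⟩⟩
  · have hz1 : 1 ≤ ‖z‖ := by
      by_contra! h
      exact hzX ⟨mem_ball_zero_iff.2 h, hz⟩
    obtain ⟨y, hyT, hy⟩ := Metric.mem_closure_iff.1 hzT (1 - r) (by linarith)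
    refine ⟨none, y, hyT, (hT hyT).1, ?_⟩
    rw [mem_closedBall_zero_iff, not_le]
    have := norm_sub_norm_le z y
    rw [← dist_eq_norm] at this
    linarith

end EndNbhd

section EndsOfPuncturedBall

variable {E : Type*} [NormedAddCommGroup E] [NormedSpace ℝ E] [ProperSpace E] {ι : Type*}
  [Fintype ι] {a : ι → E}

theorem endsGe_ball_diff_range [Nontrivial E] (ha : Injective a)
    (haD : ∀ i, a i ∈ ball (0 : E) 1) :
    EndsGe ↥(ball (0 : E) 1 \ range a) (Fintype.card ι + 1) := by
  obtain ⟨r, ε, hr0, hr1, hε, -, hball, -, hdisj⟩ :=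
    exists_radii_endNbhd ha haD isCompact_empty (empty_subset _)
  have hV := endNbhd_subset hr1 hε hball hdisj
  rw [← Fintype.card_option]
  refine endsGe_card_of_pairwise_disjoint (fun j => (↑) ⁻¹' endNbhd a r ε j)
    (fun j j' h => (pairwise_disjoint_endNbhd hball hdisj h).preimage _)
    (fun j => (isOpen_endNbhd j).preimage continuous_subtype_val) ?_ fun j => ?_
  · rw [Subtype.isCompact_iff, ← preimage_iUnion, ← preimage_compl, Subtype.image_preimage_coe,
      ← sdiff_eq, diff_iUnion_endNbhd hr1 hε]
    exact (isCompact_closedBall 0 r).diff (isOpen_iUnion fun i => isOpen_ball)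
  · rw [isCompact_closure_iff_closure_image_subset (isBounded_ball.subset sdiff_subset),
      Subtype.image_preimage_coe, inter_eq_right.2 (hV j)]
    exact not_closure_endNbhd_subset hr0.le hr1 hε j

theorem EndsGe.le_card_add_one (hE : 1 < Module.rank ℝ E) (ha : Injective a)
    (haD : ∀ i, a i ∈ ball (0 : E) 1) {k : ℕ} (h : EndsGe ↥(ball (0 : E) 1 \ range a) k) :
    k ≤ Fintype.card ι + 1 := by
  rw [← Fintype.card_option]
  refine h.le_card fun K hK => ?_
  obtain ⟨r, ε, hr0, hr1, hε, hC, hball, hCa, hdisj⟩ :=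
    exists_radii_endNbhd ha haD (hK.image continuous_subtype_val) (Subtype.coe_image_subset _ _)
  have hV := endNbhd_subset hr1 hε hball hdisj
  refine ⟨fun j => (↑) ⁻¹' endNbhd a r ε j, fun j => ⟨?_, ?_⟩, fun U hU => ?_⟩
  · exact fun x hx hxK => disjoint_left.1 (disjoint_endNbhd hC hCa j) hx ⟨x, hxK, rfl⟩
  · refine IsInducing.subtypeVal.isPreconnected_image.1 ?_
    rw [Subtype.image_preimage_coe, inter_eq_right.2 (hV j)]
    exact isPreconnected_endNbhd hE hr0.le j
  · rw [isCompact_closure_iff_closure_image_subset (isBounded_ball.subset sdiff_subset)] at hU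
    obtain ⟨j, _, ⟨x, hxU, rfl⟩, hx⟩ :=
      exists_inter_endNbhd_nonempty hr1 hε (Subtype.coe_image_subset _ _) hU
    exact ⟨j, x, hxU, hx⟩

end EndsOfPuncturedBall

/-- For p ≠ q, the open unit ball of ℝⁿ (n ≥ 2) with p points removed is not
homeomorphic to the open unit ball with q points removed. -/
theorem stmt_16 (n : ℕ) (hn : 2 ≤ n) (p q : ℕ) (hpq : p ≠ q)
    (a : Fin p → EuclideanSpace ℝ (Fin n)) (ha : Function.Injective a)
    (haD : ∀ i, a i ∈ Metric.ball (0 : EuclideanSpace ℝ (Fin n)) 1)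
    (b : Fin q → EuclideanSpace ℝ (Fin n)) (hb : Function.Injective b)
    (hbD : ∀ i, b i ∈ Metric.ball (0 : EuclideanSpace ℝ (Fin n)) 1) :
    IsEmpty
      ((Metric.ball (0 : EuclideanSpace ℝ (Fin n)) 1 \ Set.range a : Set (EuclideanSpace ℝ (Fin n))) ≃ₜ
       (Metric.ball (0 : EuclideanSpace ℝ (Fin n)) 1 \ Set.range b : Set (EuclideanSpace ℝ (Fin n)))) := by
  have hE : 1 < Module.rank ℝ (EuclideanSpace ℝ (Fin n)) :=
    Module.one_lt_rank_of_one_lt_finrank (by rw [finrank_euclideanSpace_fin]; omega)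
  have : Nontrivial (EuclideanSpace ℝ (Fin n)) := rank_pos_iff_nontrivial.1 (zero_lt_one.trans hE)
  refine ⟨fun h => hpq ?_⟩
  have hqp := ((endsGe_ball_diff_range hb hbD).of_homeomorph h.symm).le_card_add_one hE ha haD
  have hpq := ((endsGe_ball_diff_range ha haD).of_homeomorph h).le_card_add_one hE hb hbD
  simp only [Fintype.card_fin] at hqp hpq
  omega
end

section
/- If the one-point compactification of a locally compact Hausdorff space X is metrizable by a metric ρ, then the function d(x,y) = ρ(x,y) + |1/ρ(x,∞) − 1/ρ(y,∞)| is a metric on X inducing the topology of X, and (X,d) is boundedly compact. -/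
open OnePoint

/-- If the one-point compactification of a locally compact Hausdorff space X is
metrized by ρ, then d(x,y) = ρ(x,y) + |1/ρ(x,∞) − 1/ρ(y,∞)| is a boundedly
compact metric on X inducing its topology. -/
theorem stmt_18 {X : Type*} [TopologicalSpace X] [T2Space X] [LocallyCompactSpace X]
    (ρ : OnePoint X → OnePoint X → ℝ)
    (ρ_self : ∀ x, ρ x x = 0)
    (ρ_eq : ∀ x y, ρ x y = 0 → x = y)
    (ρ_symm : ∀ x y, ρ x y = ρ y x)
    (ρ_tri : ∀ x y z, ρ x z ≤ ρ x y + ρ y z)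
    (ρ_top : ∀ s : Set (OnePoint X), IsOpen s ↔ ∀ x ∈ s, ∃ ε > 0, {y | ρ x y < ε} ⊆ s) :
    let d : X → X → ℝ := fun x y =>
      ρ (↑x) (↑y) + |1 / ρ (↑x) (∞ : OnePoint X) - 1 / ρ (↑y) (∞ : OnePoint X)|
    (∀ x, d x x = 0) ∧ (∀ x y, d x y = 0 → x = y) ∧ (∀ x y, d x y = d y x) ∧
    (∀ x y z, d x z ≤ d x y + d y z) ∧
    (∀ s : Set X, IsOpen s ↔ ∀ x ∈ s, ∃ ε > 0, {y | d x y < ε} ⊆ s) ∧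
    (∀ s : Set X, IsClosed s → (∃ R, ∀ x ∈ s, ∀ y ∈ s, d x y ≤ R) → IsCompact s) := by
  intro d
  have ρ_nonneg : ∀ x y, 0 ≤ ρ x y := by
    intro x y
    have h := ρ_tri x y x
    rw [ρ_self, ρ_symm y x] at h
    linarith
  have hpos : ∀ x : X, 0 < ρ (↑x) ∞ := by
    intro x
    rcases lt_or_eq_of_le (ρ_nonneg (↑x) ∞) with h | h
    · exact h
    · exact absurd (ρ_eq _ _ h.symm) (coe_ne_infty x)
  have ρ_le_d : ∀ x y : X, ρ (↑x) (↑y) ≤ d x y := fun x y =>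
    le_add_of_nonneg_right (abs_nonneg _)
  have d_self : ∀ x, d x x = 0 := by intro x; simp [d, ρ_self]
  -- key estimate: d-balls contain ρ-balls
  have key : ∀ (x : X) (ε : ℝ), 0 < ε → ∃ δ > 0, δ ≤ ρ (↑x) ∞ / 2 ∧
      ∀ y : X, ρ (↑x) (↑y) < δ → d x y < ε := by
    intro x ε hε
    set a := ρ (↑x) ∞ with ha_def
    have ha : 0 < a := hpos x
    have hC : (0:ℝ) < 1 + 2 / a ^ 2 := by positivity
    refine ⟨min (a / 2) (ε / (2 * (1 + 2 / a ^ 2))), by positivity, min_le_left _ _, ?_⟩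
    intro y hy
    have hr0 : 0 ≤ ρ (↑x) (↑y) := ρ_nonneg _ _
    have hy1 : ρ (↑x) (↑y) < a / 2 := lt_of_lt_of_le hy (min_le_left _ _)
    have hy2 : ρ (↑x) (↑y) < ε / (2 * (1 + 2 / a ^ 2)) := lt_of_lt_of_le hy (min_le_right _ _)
    set b := ρ (↑y) ∞ with hb_def
    have hab1 : a - ρ (↑x) (↑y) ≤ b := by have := ρ_tri (↑x) (↑y) ∞; linarith
    have hab2 : b - a ≤ ρ (↑x) (↑y) := by
      have := ρ_tri (↑y) (↑x) ∞
      rw [ρ_symm (↑y) (↑x)] at this; linarith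
    have hb : a / 2 < b := by linarith
    have hbpos : (0:ℝ) < b := by linarith
    have habs : |1 / a - 1 / b| ≤ 2 * ρ (↑x) (↑y) / a ^ 2 := by
      rw [abs_le]
      have h1 : 1 / a - 1 / b = (b - a) / (a * b) := by field_simp
      have hsq : a ^ 2 ≤ 2 * a * b := by nlinarith
      constructor
      · rw [h1, ← neg_div, div_le_div_iff₀ (by positivity) (by positivity)]
        nlinarith [mul_le_mul_of_nonneg_right (by linarith : a - b ≤ ρ (↑x) (↑y)) (sq_nonneg a),
          mul_le_mul_of_nonneg_left hsq hr0]
      · rw [h1, div_le_div_iff₀ (by positivity) (by positivity)]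
        nlinarith [mul_le_mul_of_nonneg_right hab2 (sq_nonneg a),
          mul_le_mul_of_nonneg_left hsq hr0]
    have : d x y ≤ ρ (↑x) (↑y) * (1 + 2 / a ^ 2) := by
      have : d x y = ρ (↑x) (↑y) + |1 / a - 1 / b| := rfl
      rw [this]; rw [mul_add, mul_one]
      have : ρ (↑x) (↑y) * (2 / a ^ 2) = 2 * ρ (↑x) (↑y) / a ^ 2 := by ring
      rw [this]
      linarith
    have hlt : ρ (↑x) (↑y) * (1 + 2 / a ^ 2) < ε := by
      rw [lt_div_iff₀ (by positivity : (0:ℝ) < 2 * (1 + 2 / a ^ 2))] at hy2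
      nlinarith
    exact lt_of_le_of_lt this hlt
  refine ⟨d_self, ?_, ?_, ?_, ?_, ?_⟩
  · -- separation
    intro x y h
    have h1 : ρ (↑x) (↑y) = 0 := by
      have := abs_nonneg (1 / ρ (↑x) (∞ : OnePoint X) - 1 / ρ (↑y) (∞ : OnePoint X))
      have h2 : d x y = ρ (↑x) (↑y) + |1 / ρ (↑x) (∞ : OnePoint X) - 1 / ρ (↑y) (∞ : OnePoint X)| := rfl
      have := ρ_nonneg (↑x : OnePoint X) (↑y)
      rw [h2] at h
      linarith
    exact coe_injective (ρ_eq _ _ h1)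
  · -- symmetry
    intro x y
    simp only [d, ρ_symm (↑x : OnePoint X) (↑y), abs_sub_comm]
  · -- triangle
    intro x y z
    have h1 := ρ_tri (↑x : OnePoint X) (↑y) (↑z)
    have h2 := abs_sub_le (1 / ρ (↑x) (∞ : OnePoint X)) (1 / ρ (↑y) (∞ : OnePoint X))
      (1 / ρ (↑z) (∞ : OnePoint X))
    simp only [d]
    linarith
  · -- topology
    intro s
    constructor
    · intro hs x hx
      have hopen : IsOpen (((↑) : X → OnePoint X) '' s) := isOpenMap_coe s hs
      obtain ⟨ε, hε, hball⟩ := (ρ_top _).1 hopen (↑x) ⟨x, hx, rfl⟩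
      refine ⟨ε, hε, fun y hy => ?_⟩
      have hmem : (↑y : OnePoint X) ∈ ((↑) : X → OnePoint X) '' s :=
        hball (lt_of_le_of_lt (ρ_le_d x y) hy)
      obtain ⟨z, hz, hzy⟩ := hmem
      exact (coe_injective hzy) ▸ hz
    · intro h
      have hopen : IsOpen (((↑) : X → OnePoint X) '' s) := by
        rw [ρ_top]
        rintro _ ⟨x, hx, rfl⟩
        obtain ⟨ε, hε, hball⟩ := h x hx
        obtain ⟨δ, hδ, hδa, hkey⟩ := key x ε hε
        refine ⟨δ, hδ, ?_⟩
        intro z hz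
        match z with
        | ∞ =>
          exfalso
          have : ρ (↑x) ∞ < δ := hz
          have := hpos x
          linarith
        | (y : X) =>
          exact ⟨y, hball (hkey y hz), rfl⟩
      have := hopen.preimage continuous_coe
      rwa [Set.preimage_image_eq s coe_injective] at this
  · -- bounded compactness
    rintro s hs ⟨R, hR⟩
    rcases s.eq_empty_or_nonempty with rfl | ⟨x0, hx0⟩
    · exact isCompact_empty
    have hR0 : 0 ≤ R := by have := hR x0 hx0 x0 hx0; rw [d_self] at this; exact this
    set C := R + 1 / ρ (↑x0) ∞ with hC_def
    have ha0 : 0 < ρ (↑x0 : OnePoint X) ∞ := hpos x0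
    have hC : 0 < C := by positivity
    have hlow : ∀ x ∈ s, 1 / C ≤ ρ (↑x) ∞ := by
      intro x hx
      have h1 : |1 / ρ (↑x) (∞ : OnePoint X) - 1 / ρ (↑x0) (∞ : OnePoint X)| ≤ R := by
        have h2 := hR x hx x0 hx0
        have h3 : ρ (↑x : OnePoint X) (↑x0) ≥ 0 := ρ_nonneg _ _
        have : d x x0 = ρ (↑x) (↑x0) + |1 / ρ (↑x) (∞ : OnePoint X) - 1 / ρ (↑x0) (∞ : OnePoint X)| := rfl
        rw [this] at h2
        linarith
      have h4 : 1 / ρ (↑x) (∞ : OnePoint X) ≤ C := by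
        have := abs_le.1 h1
        rw [hC_def]
        linarith [this.2]
      rw [div_le_iff₀ (hpos x)] at h4
      rw [div_le_iff₀ hC]
      linarith [mul_comm C (ρ (↑x : OnePoint X) ∞)]
    have hclosed : IsClosed (((↑) : X → OnePoint X) '' s) := by
      rw [← isOpen_compl_iff, ρ_top]
      intro z hz
      match z with
      | ∞ =>
        refine ⟨1 / C, by positivity, ?_⟩
        rintro w hw ⟨x, hx, rfl⟩
        have h1 : ρ ∞ (↑x : OnePoint X) < 1 / C := hw
        rw [ρ_symm] at h1
        exact absurd (hlow x hx) (not_le.2 h1)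
      | (x : X) =>
        have hxns : x ∉ s := fun hxs => hz ⟨x, hxs, rfl⟩
        have hopen : IsOpen (((↑) : X → OnePoint X) '' sᶜ) :=
          isOpenMap_coe _ hs.isOpen_compl
        obtain ⟨ε, hε, hball⟩ := (ρ_top _).1 hopen (↑x) ⟨x, hxns, rfl⟩
        refine ⟨ε, hε, fun w hw => ?_⟩
        obtain ⟨y, hy, rfl⟩ := hball hw
        rintro ⟨z', hz', hzz⟩
        exact hy ((coe_injective hzz) ▸ hz')
    have hcompact : IsCompact (((↑) : X → OnePoint X) '' s) := hclosed.isCompact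
    exact isOpenEmbedding_coe.isEmbedding.isCompact_iff.2 hcompact
end

section
/- A locally compact Hausdorff space X has a metrizable one-point compactification if and only if the topology of X is induced by a boundedly compact metric. -/
/-!
If `OnePoint X` carries a metric, then `x ↦ (x, 1 / dist x ∞)` embeds `X` as a closed subset of
the proper space `OnePoint X × ℝ`, and the metric pulled back along it is boundedly compact.
Conversely, a boundedly compact metric makes `X` σ-compact and second countable; a compact
exhaustion then provides countably many basic neighbourhoods of `∞`, so the compact Hausdorff
space `OnePoint X` is second countable, hence metrizable by Urysohn's theorem.
-/

open Set Topology OnePoint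

def IsBoundedlyCompactDist {X : Type*} [TopologicalSpace X] (d : X → X → ℝ) : Prop :=
  (∀ x, d x x = 0) ∧ (∀ x y, d x y = 0 → x = y) ∧ (∀ x y, d x y = d y x) ∧
    (∀ x y z, d x z ≤ d x y + d y z) ∧
    (∀ s : Set X, IsOpen s ↔ ∀ x ∈ s, ∃ ε > 0, {y | d x y < ε} ⊆ s) ∧
    (∀ s : Set X, IsClosed s → (∃ R, ∀ x ∈ s, ∀ y ∈ s, d x y ≤ R) → IsCompact s)

theorem isBoundedlyCompactDist_dist {X : Type*} [MetricSpace X] [ProperSpace X] :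
    IsBoundedlyCompactDist (dist : X → X → ℝ) := by
  refine ⟨dist_self, fun _ _ => dist_eq_zero.1, dist_comm, dist_triangle, fun s => ?_,
    fun s hs hbdd => Metric.isCompact_of_isClosed_isBounded hs (Metric.isBounded_iff.2 hbdd)⟩
  simp only [Metric.isOpen_iff, Metric.ball, dist_comm]

theorem exists_isBoundedlyCompactDist_of_isClosedEmbedding {X Z : Type*} [TopologicalSpace X]
    [MetricSpace Z] [ProperSpace Z] {g : X → Z} (hg : IsClosedEmbedding g) :
    ∃ d : X → X → ℝ, IsBoundedlyCompactDist d := by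
  let : MetricSpace X := hg.isEmbedding.comapMetricSpace g
  have : ProperSpace X :=
    (Isometry.of_dist_eq fun _ _ => rfl).lipschitz.properSpace hg.isProperMap
  exact ⟨dist, isBoundedlyCompactDist_dist⟩

theorem Topology.IsEmbedding.isClosedEmbedding_prodMk_inv_dist {X Y : Type*}
    [TopologicalSpace X] [MetricSpace Y] {e : X → Y} {p : Y} (he : IsEmbedding e)
    (hrange : range e = {p}ᶜ) : IsClosedEmbedding fun x => (e x, (dist (e x) p)⁻¹) := by
  have hdist : ∀ x, dist (e x) p ≠ 0 := fun x =>
    dist_ne_zero.2 (hrange.subset (mem_range_self x))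
  have hcont : Continuous fun x => (dist (e x) p)⁻¹ :=
    (he.continuous.dist continuous_const).inv₀ hdist
  refine ⟨.of_comp (he.continuous.prodMk hcont) continuous_fst he, ?_⟩
  have hgraph : range (fun x => (e x, (dist (e x) p)⁻¹)) = {q : Y × ℝ | q.2 * dist q.1 p = 1} := by
    ext ⟨y, t⟩
    refine ⟨?_, fun h => ?_⟩
    · rintro ⟨x, hx⟩
      simp only [Prod.mk.injEq] at hx
      simp [← hx.1, ← hx.2, inv_mul_cancel₀ (hdist x)]
    · have hy : y ∈ range e := hrange ▸ fun hyp : y = p => by simp [hyp] at h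
      obtain ⟨x, rfl⟩ := hy
      exact ⟨x, Prod.ext rfl (eq_inv_of_mul_eq_one_left h).symm⟩
  rw [hgraph]
  exact isClosed_eq (continuous_snd.mul (continuous_fst.dist continuous_const)) continuous_const

instance OnePoint.secondCountableTopology {X : Type*} [TopologicalSpace X] [T2Space X]
    [WeaklyLocallyCompactSpace X] [SigmaCompactSpace X] [SecondCountableTopology X] :
    SecondCountableTopology (OnePoint X) := by
  obtain ⟨B, hBc, -, hB⟩ := TopologicalSpace.exists_countable_basis X
  let K := CompactExhaustion.choice X
  let S : Set (Set (OnePoint X)) :=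
    image ((↑) : X → OnePoint X) '' B ∪ range fun n => ((↑) '' K n : Set (OnePoint X))ᶜ
  refine (TopologicalSpace.isTopologicalBasis_of_isOpen_of_nhds ?_ ?_).secondCountableTopology
    (b := S) ((hBc.image _).union (countable_range _))
  · rintro u (⟨b, hb, rfl⟩ | ⟨n, rfl⟩)
    · exact isOpen_image_coe.2 (hB.isOpen hb)
    · exact isOpen_compl_image_coe.2 ⟨(K.isCompact n).isClosed, K.isCompact n⟩
  · rintro (_ | x) u hu hu_open
    · obtain ⟨-, hcompact⟩ := (isOpen_iff_of_mem hu).1 hu_open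
      obtain ⟨n, hn⟩ := K.exists_superset_of_isCompact hcompact
      refine ⟨_, Or.inr ⟨n, rfl⟩, infty_notMem_image_coe, fun z hz => ?_⟩
      induction z using OnePoint.rec with
      | infty => exact hu
      | coe y => exact not_not.1 fun hy => hz (mem_image_of_mem _ (hn hy))
    · obtain ⟨b, hb, hxb, hbu⟩ :=
        hB.exists_subset_of_mem_open hu (hu_open.preimage continuous_coe)
      exact ⟨_, Or.inl ⟨b, hb, rfl⟩, mem_image_of_mem _ hxb, image_subset_iff.2 hbu⟩

theorem stmt_19_general {X : Type*} [TopologicalSpace X] :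
    TopologicalSpace.MetrizableSpace (OnePoint X) ↔
      ∃ d : X → X → ℝ,
        (∀ x, d x x = 0) ∧ (∀ x y, d x y = 0 → x = y) ∧ (∀ x y, d x y = d y x) ∧
        (∀ x y z, d x z ≤ d x y + d y z) ∧
        (∀ s : Set X, IsOpen s ↔ ∀ x ∈ s, ∃ ε > 0, {y | d x y < ε} ⊆ s) ∧
        (∀ s : Set X, IsClosed s → (∃ R, ∀ x ∈ s, ∀ y ∈ s, d x y ≤ R) → IsCompact s) := by
  constructor
  · intro _
    let : MetricSpace (OnePoint X) := TopologicalSpace.metrizableSpaceMetric _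
    exact exists_isBoundedlyCompactDist_of_isClosedEmbedding
      (isOpenEmbedding_coe.isEmbedding.isClosedEmbedding_prodMk_inv_dist
        (compl_eq_comm.1 compl_range_coe).symm)
  · rintro ⟨d, dist_self, eq_of_dist_eq_zero, dist_comm, dist_triangle, isOpen_iff, hcompact⟩
    let : MetricSpace X := .ofDistTopology d dist_self dist_comm dist_triangle
      (fun s => by simpa only [subset_def, mem_ofPred_eq] using isOpen_iff s) eq_of_dist_eq_zero
    have : ProperSpace X := ⟨fun x r =>
      hcompact _ Metric.isClosed_closedBall (Metric.isBounded_iff.1 Metric.isBounded_closedBall)⟩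
    infer_instance

/-- A locally compact Hausdorff space has a metrizable one-point
compactification iff its topology is induced by a boundedly compact metric. -/
theorem stmt_19 {X : Type*} [TopologicalSpace X] [T2Space X] [LocallyCompactSpace X] :
    TopologicalSpace.MetrizableSpace (OnePoint X) ↔
      ∃ d : X → X → ℝ,
        (∀ x, d x x = 0) ∧ (∀ x y, d x y = 0 → x = y) ∧ (∀ x y, d x y = d y x) ∧
        (∀ x y z, d x z ≤ d x y + d y z) ∧
        (∀ s : Set X, IsOpen s ↔ ∀ x ∈ s, ∃ ε > 0, {y | d x y < ε} ⊆ s) ∧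
        (∀ s : Set X, IsClosed s → (∃ R, ∀ x ∈ s, ∀ y ∈ s, d x y ≤ R) → IsCompact s) :=
  stmt_19_general
end
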